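/- arXiv:2209.12819 — 3 statements merged into one kernel-verified Lean document; each statement's English description precedes it below -/
import Mathlib

section
/- Let H be a 3-uniform marked hyperforest with no fully marked edge (no e ∈ E(H) with e ⊆ M(H)). Then H is a Maker win if and only if H contains a nunchaku as a subhypergraph. Moreover, if H is a Maker win, then τ_M(H) = 1 + ⌈log₂ L(H)⌉. -/
namespace MB

/-- A marked hypergraph: a finite vertex set, an edge set of finite subsets of vertices,
and a set of marked vertices. -/
structure MarkedHypergraph (V : Type) where
  verts : Finset V
  edges : Finset (Finset V)
  marked : Finset V

namespace MarkedHypergraph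

variable {V : Type} [DecidableEq V]

/-- The structural requirements on a marked hypergraph: nonempty vertex set, edges are
nonempty subsets of the vertex set, marked vertices are vertices. -/
def IsValid (H : MarkedHypergraph V) : Prop :=
  H.verts.Nonempty ∧ (∀ e ∈ H.edges, e ⊆ H.verts ∧ e.Nonempty) ∧ H.marked ⊆ H.verts

/-- `k`-uniformity: every edge has exactly `k` vertices. -/
def IsUniform (H : MarkedHypergraph V) (k : ℕ) : Prop :=
  ∀ e ∈ H.edges, e.card = k

/-- `H^{+x}`: mark the vertex `x`. -/
def plus (H : MarkedHypergraph V) (x : V) : MarkedHypergraph V :=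
  ⟨H.verts, H.edges, insert x H.marked⟩

/-- `H^{-y}`: remove the vertex `y` and all edges containing it. -/
def minus (H : MarkedHypergraph V) (y : V) : MarkedHypergraph V :=
  ⟨H.verts.erase y, H.edges.filter fun e => y ∉ e, H.marked.erase y⟩

/-- `X` is a subhypergraph of `H`. -/
def IsSub (X H : MarkedHypergraph V) : Prop :=
  X.verts ⊆ H.verts ∧ X.edges ⊆ H.edges ∧ X.marked = X.verts ∩ H.marked

/-- A trivial Maker win: some edge has at most one non-marked vertex. -/
def TrivialMakerWin (H : MarkedHypergraph V) : Prop :=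
  ∃ e ∈ H.edges, (e \ H.marked).card ≤ 1

theorem card_free_lt (H : MarkedHypergraph V) (x y : V)
    (hy : y ∈ (H.plus x).verts \ (H.plus x).marked) :
    (((H.plus x).minus y).verts \ ((H.plus x).minus y).marked).card
      < (H.verts \ H.marked).card := by
  have hy' : y ∈ H.verts \ insert x H.marked := hy
  rw [Finset.mem_sdiff] at hy'
  have hyv : y ∈ H.verts := hy'.1
  have hym : y ∉ H.marked := fun h => hy'.2 (Finset.mem_insert_of_mem h)
  show (H.verts.erase y \ (insert x H.marked).erase y).card < (H.verts \ H.marked).card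
  calc (H.verts.erase y \ (insert x H.marked).erase y).card
      ≤ ((H.verts \ H.marked).erase y).card := by
        apply Finset.card_le_card
        intro v hv
        rw [Finset.mem_sdiff, Finset.mem_erase] at hv
        rw [Finset.mem_erase, Finset.mem_sdiff]
        exact ⟨hv.1.1, hv.1.2, fun hvm =>
          hv.2 (Finset.mem_erase.mpr ⟨hv.1.1, Finset.mem_insert_of_mem hvm⟩)⟩
    _ < (H.verts \ H.marked).card :=
        Finset.card_erase_lt_of_mem (Finset.mem_sdiff.mpr ⟨hyv, hym⟩)

/-- Maker win, defined by recursion on the number of non-marked vertices: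
if at most one non-marked vertex remains, Maker wins iff the position is a trivial Maker
win; otherwise Maker wins iff he has a pick `x` such that for every answer `y` of Breaker,
the resulting position is a Maker win. -/
def MakerWin (H : MarkedHypergraph V) : Prop :=
  if (H.verts \ H.marked).card ≤ 1 then TrivialMakerWin H
  else ∃ x ∈ H.verts \ H.marked,
    ∀ y ∈ (H.plus x).verts \ (H.plus x).marked, MakerWin ((H.plus x).minus y)
termination_by (H.verts \ H.marked).card
decreasing_by exact card_free_lt H _ _ (by assumption)

/-- Breaker win: not a Maker win. -/
def BreakerWin (H : MarkedHypergraph V) : Prop := ¬ H.MakerWin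

open Classical in
/-- `τ_M(H)`: the minimum number of rounds Maker needs to claim a fully marked edge
(`⊤` if Breaker wins). -/
noncomputable def tauM (H : MarkedHypergraph V) : ℕ∞ :=
  if TrivialMakerWin H then H.edges.inf fun e => ((e \ H.marked).card : ℕ∞)
  else if (H.verts \ H.marked).card ≤ 1 then (⊤ : ℕ∞)
  else 1 + (H.verts \ H.marked).inf fun x =>
    ((H.plus x).verts \ (H.plus x).marked).attach.sup fun y =>
      tauM ((H.plus x).minus y.1)
termination_by (H.verts \ H.marked).card
decreasing_by exact card_free_lt H _ _ y.2

end MarkedHypergraph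

open MarkedHypergraph

variable {V : Type} [DecidableEq V]

/-- The intersection `I_H(𝒳)` of a collection `𝒳` of marked hypergraphs in `H`. -/
def inter (H : MarkedHypergraph V) (𝒳 : Set (MarkedHypergraph V)) : Set V :=
  {y | y ∈ H.verts ∧ y ∉ H.marked ∧ ∀ X ∈ 𝒳, y ∈ X.verts}

/-- The union of a finite collection of marked hypergraphs. -/
def unionOf (O : Finset (MarkedHypergraph V)) : MarkedHypergraph V :=
  ⟨O.sup MarkedHypergraph.verts, O.sup MarkedHypergraph.edges, O.sup MarkedHypergraph.marked⟩

/-- Isomorphism of pointed marked hypergraphs. -/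
def PointedIso (X : MarkedHypergraph V) (x : V) (Y : MarkedHypergraph V) (y : V) : Prop :=
  ∃ φ : V → V, Set.InjOn φ ↑X.verts ∧ X.verts.image φ = Y.verts ∧
    (∀ e : Finset V, e ⊆ X.verts → (e ∈ X.edges ↔ e.image φ ∈ Y.edges)) ∧
    (∀ v ∈ X.verts, (v ∈ X.marked ↔ φ v ∈ Y.marked)) ∧ φ x = y

/-- `(D,x)` is a danger: `x` is a non-marked vertex and `D^{+x}` is a Maker win. -/
def IsDanger (D : MarkedHypergraph V) (x : V) : Prop :=
  x ∈ D.verts ∧ x ∉ D.marked ∧ (D.plus x).MakerWin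

/-- A family of dangers: a set of pointed marked hypergraphs, all of which are dangers. -/
def IsDangerFamily (F : Set (MarkedHypergraph V × V)) : Prop :=
  ∀ p ∈ F, IsDanger p.1 p.2

/-- The collection of all dangers at `x` in `H`: subhypergraphs `D` of `H` containing `x`
such that `D^{+x}` is a Maker win. -/
def dangersAt (H : MarkedHypergraph V) (x : V) : Set (MarkedHypergraph V) :=
  {D | D.IsValid ∧ D.IsSub H ∧ x ∈ D.verts ∧ (D.plus x).MakerWin}

/-- `xℱ(H)`: the collection of subhypergraphs `X` of `H` containing `x` such that `(X,x)`
is isomorphic to a member of the family `F`. -/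
def xFam (F : Set (MarkedHypergraph V × V)) (H : MarkedHypergraph V) (x : V) :
    Set (MarkedHypergraph V) :=
  {X | X.IsValid ∧ X.IsSub H ∧ x ∈ X.verts ∧ ∃ p ∈ F, PointedIso X x p.1 p.2}

/-- `J F r H` is the property `J_r(ℱ,H)` (for `r ≥ 1`; `J F 0 H` is `True` by convention). -/
def J (F : Set (MarkedHypergraph V × V)) : ℕ → MarkedHypergraph V → Prop
  | 0, _ => True
  | r + 1, H => ∀ x ∈ H.verts \ H.marked,
      ∃ y ∈ inter (H.plus x) (xFam F H x), J F r ((H.plus x).minus y)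

/-- `P` is an `ab`-path (in a 3-uniform setting) of length `L`. -/
def IsPathLen (P : MarkedHypergraph V) (a b : V) (L : ℕ) : Prop :=
  (L = 0 ∧ a = b ∧ P.verts = {a} ∧ P.edges = ∅) ∨
  (1 ≤ L ∧ a ≠ b ∧ ∃ e : ℕ → Finset V,
    P.edges = (Finset.range L).image e ∧
    P.verts = (Finset.range L).biUnion e ∧
    (∀ i, i < L → (e i).card = 3) ∧
    (∀ i j, i < L → j < L → i ≠ j → e i ≠ e j) ∧
    a ∈ e 0 ∧ b ∈ e (L - 1) ∧
    (∀ i, i + 1 < L → (e i ∩ e (i + 1)).card = 1) ∧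
    (∀ i j, i + 2 ≤ j → j < L → e i ∩ e j = ∅) ∧
    (∀ i, 1 ≤ i → i < L → a ∉ e i) ∧
    (∀ i, i + 1 < L → b ∉ e i))

/-- `P` is an `ab`-path. -/
def IsPath (P : MarkedHypergraph V) (a b : V) : Prop := ∃ L, IsPathLen P a b L

/-- `C` is an `a`-cycle of length `L`. -/
def IsCycleLen (C : MarkedHypergraph V) (a : V) (L : ℕ) : Prop :=
  2 ≤ L ∧ ∃ e : ℕ → Finset V,
    C.edges = (Finset.range L).image e ∧
    C.verts = (Finset.range L).biUnion e ∧
    (∀ i, i < L → (e i).card = 3) ∧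
    (∀ i j, i < L → j < L → i ≠ j → e i ≠ e j) ∧
    a ∈ e 0 ∧ a ∈ e (L - 1) ∧
    (∀ i, 0 < i → i + 1 < L → a ∉ e i) ∧
    (L = 2 → (e 0 ∩ e 1).card = 2) ∧
    (3 ≤ L → (e 0 ∩ e (L - 1) = {a} ∧ ∀ i, i + 1 < L → (e i ∩ e (i + 1)).card = 1)) ∧
    (∀ i j, i < j → j < L → 2 ≤ j - i → j - i ≤ L - 2 → e i ∩ e j = ∅)

/-- `C` is an `a`-cycle. -/
def IsCycle (C : MarkedHypergraph V) (a : V) : Prop := ∃ L, IsCycleLen C a L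

/-- `T` is an `a`-tadpole: the union of an `ab`-path and a `b`-cycle meeting only at `b`. -/
def IsTadpole (T : MarkedHypergraph V) (a : V) : Prop :=
  ∃ b P C, IsPath P a b ∧ IsCycle C b ∧ P.verts ∩ C.verts = {b} ∧
    T.verts = P.verts ∪ C.verts ∧ T.edges = P.edges ∪ C.edges

/-- `S` is an `x`-snake: an `xm`-path of positive length with `m` marked. -/
def IsSnake (S : MarkedHypergraph V) (x : V) : Prop :=
  ∃ m L, 1 ≤ L ∧ IsPathLen S x m L ∧ m ∈ S.marked

/-- `N` is a nunchaku: an `ab`-path of positive length with marked set exactly `{a,b}`. -/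
def IsNunchaku (N : MarkedHypergraph V) : Prop :=
  ∃ a b L, 1 ≤ L ∧ IsPathLen N a b L ∧ N.marked = {a, b}

/-- `C` is an `a`-necklace: an `a`-cycle with marked set exactly `{a}`. -/
def IsNecklace (C : MarkedHypergraph V) (a : V) : Prop :=
  ∃ L, IsCycleLen C a L ∧ C.marked = {a}

/-- The family `𝒮` of pointed snakes with exactly one marked vertex. -/
def famS : Set (MarkedHypergraph V × V) := {p | IsSnake p.1 p.2 ∧ p.1.marked.card = 1}

/-- The family `𝒞` of pointed cycles with no marked vertex. -/
def famC : Set (MarkedHypergraph V × V) := {p | IsCycle p.1 p.2 ∧ p.1.marked = ∅}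

/-- The family `𝒯` of pointed tadpoles with no marked vertex. -/
def famT : Set (MarkedHypergraph V × V) := {p | IsTadpole p.1 p.2 ∧ p.1.marked = ∅}

/-- `𝒟₀ = 𝒮 ∪ 𝒞`. -/
def famD0 : Set (MarkedHypergraph V × V) := famS ∪ famC

/-- `𝒟₁ = 𝒮 ∪ 𝒯`. -/
def famD1 : Set (MarkedHypergraph V × V) := famS ∪ famT

/-- `obs(ℱ)`: pointed marked hypergraphs `(D,x)` which, for some `ℱ`-dangerous vertex `z`,
are the union of a collection `𝒪` of subhypergraphs, each of which is (or becomes, once `x`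
is marked) an `ℱ`-danger at `z`, with `I_{D^{+x+z}}(𝒪) = ∅`. -/
def obs (F : Set (MarkedHypergraph V × V)) : Set (MarkedHypergraph V × V) :=
  {p | p.2 ∈ p.1.verts ∧ p.2 ∉ p.1.marked ∧
    ∃ z, z ∈ p.1.verts ∧ z ∉ p.1.marked ∧ z ≠ p.2 ∧
      ∃ O : Set (MarkedHypergraph V),
        (∀ X ∈ O, X.IsValid ∧ X.IsSub p.1) ∧
        (∀ X ∈ O, p.2 ∈ X.verts → X.plus p.2 ∈ xFam F (p.1.plus p.2) z) ∧
        (∀ X ∈ O, p.2 ∉ X.verts → X ∈ xFam F p.1 z) ∧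
        (∀ v ∈ p.1.verts, ∃ X ∈ O, v ∈ X.verts) ∧
        (∀ e ∈ p.1.edges, ∃ X ∈ O, e ∈ X.edges) ∧
        (∀ m ∈ p.1.marked, ∃ X ∈ O, m ∈ X.marked) ∧
        inter ((p.1.plus p.2).plus z) O = ∅}

/-- `obsr(ℱ)`: the members `(D,x)` of `obs(ℱ)` such that `D` contains no `ℱ`-danger at `x`. -/
def obsr (F : Set (MarkedHypergraph V × V)) : Set (MarkedHypergraph V × V) :=
  {p | p ∈ obs F ∧ xFam F p.1 p.2 = ∅}

/-- `ℱ^{*r}`. -/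
def star (F : Set (MarkedHypergraph V × V)) : ℕ → Set (MarkedHypergraph V × V)
  | 0 => F
  | r + 1 => F ∪ obs (star F r)

/-- `𝒟₂ = 𝒟₁ ∪ obsr(𝒟₁)`. -/
def famD2 : Set (MarkedHypergraph V × V) := famD1 ∪ obsr famD1

/-- The lengths of nunchakus contained in `H`. -/
def nunchakuLengths (H : MarkedHypergraph V) : Set ℕ :=
  {L | 1 ≤ L ∧ ∃ N a b, N.IsSub H ∧ IsPathLen N a b L ∧ N.marked = {a, b}}

/-- `H` contains a fully marked edge, a nunchaku, or a necklace. -/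
def WinPattern (H : MarkedHypergraph V) : Prop :=
  (∃ e ∈ H.edges, e ⊆ H.marked) ∨ (∃ N, N.IsSub H ∧ IsNunchaku N) ∨
    (∃ C a, C.IsSub H ∧ IsNecklace C a)

/-- `Wk k H`: Maker can force that after `k` rounds of play the updated marked hypergraph
contains a fully marked edge, a nunchaku or a necklace. -/
def Wk : ℕ → MarkedHypergraph V → Prop
  | 0, H => WinPattern H
  | k + 1, H => ∃ x ∈ H.verts \ H.marked,
      ∀ y ∈ (H.plus x).verts \ (H.plus x).marked, Wk k ((H.plus x).minus y)

end MB
set_option linter.dupNamespace false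
set_option linter.unusedVariables false
namespace MB
open MarkedHypergraph
variable {V : Type} [DecidableEq V]


/-- Bare path data: the conditions of `IsPathLen` for positive length. -/
structure PE (e : ℕ → Finset V) (a b : V) (L : ℕ) : Prop where
  pos : 1 ≤ L
  ne : a ≠ b
  card3 : ∀ i, i < L → (e i).card = 3
  inj : ∀ i j, i < L → j < L → i ≠ j → e i ≠ e j
  mema : a ∈ e 0
  memb : b ∈ e (L - 1)
  adj : ∀ i, i + 1 < L → (e i ∩ e (i + 1)).card = 1
  gap : ∀ i j, i + 2 ≤ j → j < L → e i ∩ e j = ∅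
  anotin : ∀ i, 1 ≤ i → i < L → a ∉ e i
  bnotin : ∀ i, i + 1 < L → b ∉ e i

def pverts (e : ℕ → Finset V) (L : ℕ) : Finset V := (Finset.range L).biUnion e
def pedges (e : ℕ → Finset V) (L : ℕ) : Finset (Finset V) := (Finset.range L).image e

lemma mem_pverts {e : ℕ → Finset V} {L : ℕ} {v : V} :
    v ∈ pverts e L ↔ ∃ i, i < L ∧ v ∈ e i := by
  simp [pverts, Finset.mem_biUnion]

lemma mem_pedges {e : ℕ → Finset V} {L : ℕ} {g : Finset V} :
    g ∈ pedges e L ↔ ∃ i, i < L ∧ e i = g := by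
  simp [pedges, Finset.mem_image]

lemma PE.isPathLen {e : ℕ → Finset V} {a b : V} {L : ℕ} (h : PE e a b L)
    {P : MarkedHypergraph V} (hv : P.verts = pverts e L) (he : P.edges = pedges e L) :
    IsPathLen P a b L := by
  refine Or.inr ⟨h.pos, h.ne, e, he, hv, h.card3, h.inj, h.mema, h.memb, h.adj, h.gap,
    h.anotin, h.bnotin⟩

lemma pe_of_isPathLen {P : MarkedHypergraph V} {a b : V} {L : ℕ}
    (h : IsPathLen P a b L) (hL : 1 ≤ L) :
    ∃ e : ℕ → Finset V, PE e a b L ∧ P.verts = pverts e L ∧ P.edges = pedges e L := by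
  rcases h with ⟨h0, _⟩ | ⟨_, hne, e, he, hv, h3, hi, ha, hb, hadj, hgap, han, hbn⟩
  · omega
  · exact ⟨e, ⟨hL, hne, h3, hi, ha, hb, hadj, hgap, han, hbn⟩, hv, he⟩

/-- Occurrences of a vertex in a path are in consecutive edges. -/
lemma PE.occ_close {e : ℕ → Finset V} {a b : V} {L : ℕ} (h : PE e a b L)
    {v : V} {i j : ℕ} (hi : v ∈ e i) (hj : v ∈ e j) (hij : i ≤ j) (hjL : j < L) :
    j ≤ i + 1 := by
  by_contra hc
  have := h.gap i j (by omega) hjL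
  have : v ∈ e i ∩ e j := Finset.mem_inter.2 ⟨hi, hj⟩
  simp_all

/-- Reverse a path. -/
lemma PE.reverse {e : ℕ → Finset V} {a b : V} {L : ℕ} (h : PE e a b L) :
    PE (fun i => e (L - 1 - i)) b a L := by
  have hL := h.pos
  refine ⟨h.pos, h.ne.symm, ?_, ?_, ?_, ?_, ?_, ?_, ?_, ?_⟩
  · intro i hi; exact h.card3 _ (by omega)
  · intro i j hi hj hij hc; exact h.inj (L-1-i) (L-1-j) (by omega) (by omega) (by omega) hc
  · simpa using h.memb
  · simpa using h.mema
  · intro i hi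
    have h2 : L - 1 - i = (L - 1 - (i+1)) + 1 := by omega
    have := h.adj (L - 1 - (i+1)) (by omega)
    rw [Finset.inter_comm] at this
    rw [h2]; exact this
  · intro i j hij hj
    rw [Finset.inter_comm]
    exact h.gap (L-1-j) (L-1-i) (by omega) (by omega)
  · intro i h1 hi; exact h.bnotin _ (by omega)
  · intro i hi
    have : L - 1 - i ≠ 0 := by omega
    exact h.anotin _ (by omega) (by omega)

/-- Prefix of a path up to the first occurrence of `z`. -/
lemma PE.prefix {e : ℕ → Finset V} {a b : V} {L : ℕ} (h : PE e a b L)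
    {z : V} {k : ℕ} (hk : k < L) (hz : z ∈ e k) (hmin : ∀ j, j < k → z ∉ e j)
    (hza : z ≠ a) : PE e a z (k + 1) := by
  refine ⟨by omega, Ne.symm hza, ?_, ?_, h.mema, by simpa using hz, ?_, ?_, ?_, ?_⟩
  · intro i hi; exact h.card3 _ (by omega)
  · intro i j hi hj hij; exact h.inj i j (by omega) (by omega) hij
  · intro i hi; exact h.adj _ (by omega)
  · intro i j hij hj; exact h.gap i j hij (by omega)
  · intro i h1 hi; exact h.anotin _ h1 (by omega)
  · intro i hi; exact hmin _ (by omega)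

/-- Suffix of a path from the last occurrence of `z`. -/
lemma PE.suffix {e : ℕ → Finset V} {a b : V} {L : ℕ} (h : PE e a b L)
    {z : V} {k : ℕ} (hk : k < L) (hz : z ∈ e k) (hmax : ∀ j, k < j → j < L → z ∉ e j)
    (hzb : z ≠ b) : PE (fun i => e (k + i)) z b (L - k) := by
  refine ⟨by omega, hzb, ?_, ?_, by simpa using hz, ?_, ?_, ?_, ?_, ?_⟩
  · intro i hi; exact h.card3 _ (by omega)
  · intro i j hi hj hij; exact h.inj _ _ (by omega) (by omega) (by omega)
  · show b ∈ e (k + (L - k - 1)); have : k + (L - k - 1) = L - 1 := by omega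
    rw [this]; exact h.memb
  · intro i hi
    have : k + (i+1) = (k+i) + 1 := by omega
    rw [this]; exact h.adj _ (by omega)
  · intro i j hij hj; exact h.gap _ _ (by omega) (by omega)
  · intro i h1 hi; exact hmax _ (by omega) (by omega)
  · intro i hi
    intro hc
    exact h.bnotin _ (by omega) hc

/-- first occurrence index of a vertex of the path. -/
lemma PE.exists_first {e : ℕ → Finset V} {L : ℕ} {z : V}
    (hz : z ∈ pverts e L) : ∃ k, k < L ∧ z ∈ e k ∧ ∀ j, j < k → z ∉ e j := by
  classical
  rcases mem_pverts.1 hz with ⟨i, hi, hzi⟩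
  have hex : ∃ k, z ∈ e k := ⟨i, hzi⟩
  refine ⟨Nat.find hex, ?_, Nat.find_spec hex, fun j hj => Nat.find_min hex hj⟩
  exact lt_of_le_of_lt (Nat.find_min' hex hzi) hi

lemma PE.exists_last {e : ℕ → Finset V} {L : ℕ} {z : V}
    (hz : z ∈ pverts e L) : ∃ k, k < L ∧ z ∈ e k ∧ ∀ j, k < j → j < L → z ∉ e j := by
  classical
  rcases mem_pverts.1 hz with ⟨i, hi, hzi⟩
  have hd : DecidablePred (fun j => z ∈ e j) := fun j => inferInstance
  refine ⟨Nat.findGreatest (fun j => z ∈ e j) (L-1), ?_, ?_, ?_⟩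
  · have := Nat.findGreatest_le (P := fun j => z ∈ e j) (L-1); omega
  · exact Nat.findGreatest_spec (P := fun j => z ∈ e j) (n := L-1) (m := i) (by omega) hzi
  · intro j hj hjL
    exact Nat.findGreatest_is_greatest (P := fun j => z ∈ e j) (n := L-1) hj (by omega)



/-- All edges of the indexed family lie in `H`. -/
def EIn (H : MarkedHypergraph V) (e : ℕ → Finset V) (L : ℕ) : Prop :=
  ∀ i, i < L → e i ∈ H.edges

lemma pverts_subset {H : MarkedHypergraph V} (hval : H.IsValid) {e : ℕ → Finset V} {L : ℕ}
    (hE : EIn H e L) : pverts e L ⊆ H.verts := by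
  intro v hv
  rcases mem_pverts.1 hv with ⟨i, hi, hvi⟩
  exact (hval.2.1 _ (hE i hi)).1 hvi

lemma PE.mem_only_a {e : ℕ → Finset V} {a b : V} {L : ℕ} (h : PE e a b L)
    {i : ℕ} (hi : i < L) (ha : a ∈ e i) : i = 0 := by
  by_contra hc; exact h.anotin i (by omega) hi ha

lemma PE.mem_only_b {e : ℕ → Finset V} {a b : V} {L : ℕ} (h : PE e a b L)
    {i : ℕ} (hi : i < L) (hb : b ∈ e i) : i = L - 1 := by
  by_contra hc; exact h.bnotin i (by omega) hb

/-- Two paths with the same endpoints sharing only those endpoints yield a cycle,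
contradicting the forest hypothesis. -/
lemma two_paths_false {H : MarkedHypergraph V} (hval : H.IsValid)
    (hforest : ¬ ∃ C c, MB.MarkedHypergraph.IsSub C H ∧ MB.IsCycle C c)
    {e f : ℕ → Finset V} {a z : V} {p q : ℕ}
    (hp : PE e a z p) (hq : PE f a z q) (he : EIn H e p) (hf : EIn H f q)
    (hsh : pverts e p ∩ pverts f q ⊆ {a, z}) : False := by
  have haz := hp.ne
  set L : ℕ := p + q with hL
  set g : ℕ → Finset V := fun i => if i < p then e i else f (q - 1 - (i - p)) with hg
  have hgE : EIn H g L := by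
    intro i hi
    by_cases h' : i < p
    · simpa [hg, h'] using he i h'
    · simp only [hg, if_neg h']; exact hf _ (by omega)
  -- membership conversions
  have hge : ∀ i, i < p → g i = e i := fun i hi => by simp [hg, hi]
  have hgf : ∀ i, p ≤ i → i < L → g i = f (q - 1 - (i - p)) := fun i hi hi' => by
    simp [hg, Nat.not_lt.2 hi]
  -- shared-vertex consequences
  have hmix : ∀ i j, i < p → j < q → ∀ v, v ∈ e i → v ∈ f j → v = a ∨ v = z := by
    intro i j hi hj v hvi hvj
    have : v ∈ pverts e p ∩ pverts f q :=
      Finset.mem_inter.2 ⟨mem_pverts.2 ⟨i, hi, hvi⟩, mem_pverts.2 ⟨j, hj, hvj⟩⟩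
    have := hsh this
    simpa using this
  have hmixne : ∀ i j, i < p → j < q → e i ≠ f j := by
    intro i j hi hj hc
    have hsub : e i ⊆ {a, z} := by
      intro v hv
      rcases hmix i j hi hj v hv (hc ▸ hv) with h1 | h1 <;> simp [h1]
    have := Finset.card_le_card hsub
    have h2 := hp.card3 i hi
    have : (({a, z} : Finset V)).card ≤ 2 := Finset.card_insert_le _ _ |>.trans (by simp)
    omega
  have hq1 := hq.pos
  have hp1 := hp.pos
  -- the cycle
  have hcyc : IsCycleLen ⟨pverts g L, pedges g L, pverts g L ∩ H.marked⟩ a L := by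
    refine ⟨by omega, g, rfl, rfl, ?_, ?_, ?_, ?_, ?_, ?_, ?_, ?_⟩
    · intro i hi
      by_cases h' : i < p
      · rw [hge i h']; exact hp.card3 i h'
      · rw [hgf i (by omega) hi]; exact hq.card3 _ (by omega)
    · intro i j hi hj hij
      by_cases h1 : i < p <;> by_cases h2 : j < p
      · rw [hge i h1, hge j h2]; exact hp.inj i j h1 h2 hij
      · rw [hge i h1, hgf j (by omega) hj]; exact hmixne _ _ h1 (by omega)
      · rw [hgf i (by omega) hi, hge j h2]; exact (hmixne _ _ h2 (by omega)).symm
      · rw [hgf i (by omega) hi, hgf j (by omega) hj]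
        exact hq.inj _ _ (by omega) (by omega) (by omega)
    · rw [hge 0 (by omega)]; exact hp.mema
    · rw [hgf (L-1) (by omega) (by omega)]
      have : q - 1 - (L - 1 - p) = 0 := by omega
      rw [this]; exact hq.mema
    · intro i hi0 hiL
      by_cases h' : i < p
      · rw [hge i h']; exact hp.anotin i (by omega) h'
      · rw [hgf i (by omega) (by omega)]
        exact hq.anotin _ (by omega) (by omega)
    · -- L = 2 case
      intro hL2
      have hp2 : p = 1 := by omega
      have hq2 : q = 1 := by omega
      rw [hge 0 (by omega), hgf 1 (by omega) (by omega)]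
      have h01 : q - 1 - (1 - p) = 0 := by omega
      rw [h01]
      have hsub : e 0 ∩ f 0 ⊆ {a, z} := by
        intro v hv
        rcases Finset.mem_inter.1 hv with ⟨h1, h2⟩
        rcases hmix 0 0 (by omega) (by omega) v h1 h2 with h3 | h3 <;> simp [h3]
      have hsup : ({a, z} : Finset V) ⊆ e 0 ∩ f 0 := by
        intro v hv
        rcases Finset.mem_insert.1 hv with h3 | h3
        · subst h3
          exact Finset.mem_inter.2 ⟨hp.mema, hq.mema⟩
        · rw [Finset.mem_singleton] at h3; subst h3
          refine Finset.mem_inter.2 ⟨?_, ?_⟩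
          · have := hp.memb; rwa [hp2] at this
          · have := hq.memb; rwa [hq2] at this
      have : e 0 ∩ f 0 = {a, z} := Finset.Subset.antisymm hsub hsup
      rw [this]
      rw [Finset.card_insert_of_notMem (by simp [haz]), Finset.card_singleton]
    · -- L ≥ 3 case
      intro hL3
      constructor
      · rw [hge 0 (by omega), hgf (L-1) (by omega) (by omega)]
        have h01 : q - 1 - (L - 1 - p) = 0 := by omega
        rw [h01]
        apply Finset.Subset.antisymm
        · intro v hv
          rcases Finset.mem_inter.1 hv with ⟨h1, h2⟩
          rcases hmix 0 0 (by omega) (by omega) v h1 h2 with h3 | h3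
          · simp [h3]
          · subst h3
            -- z ∈ e 0 forces p = 1; z ∈ f 0 forces q = 1; contradiction with L ≥ 3
            have hzp := hp.mem_only_b (by omega) h1
            have hzq := hq.mem_only_b (by omega) h2
            omega
        · simp only [Finset.singleton_subset_iff]
          exact Finset.mem_inter.2 ⟨hp.mema, hq.mema⟩
      · intro i hi
        by_cases h1 : i + 1 < p
        · rw [hge i (by omega), hge (i+1) h1]; exact hp.adj i h1
        · by_cases h2 : i < p
          · -- i = p - 1, i + 1 = p : the junction at z
            have hip : i = p - 1 := by omega
            rw [hge i h2, hgf (i+1) (by omega) (by omega)]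
            have h01 : q - 1 - (i + 1 - p) = q - 1 := by omega
            rw [h01]
            have hzz : z ∈ e i ∩ f (q-1) := by
              refine Finset.mem_inter.2 ⟨?_, ?_⟩
              · rw [hip]; exact hp.memb
              · exact hq.memb
            rw [Finset.card_eq_one]
            refine ⟨z, Finset.Subset.antisymm ?_ (by simpa using hzz)⟩
            intro v hv
            rcases Finset.mem_inter.1 hv with ⟨hv1, hv2⟩
            rcases hmix i (q-1) h2 (by omega) v hv1 hv2 with h3 | h3
            · subst h3
              have h4 := hp.mem_only_a h2 hv1
              have h5 := hq.mem_only_a (by omega) hv2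
              omega
            · simp [h3]
          · rw [hgf i (by omega) (by omega), hgf (i+1) (by omega) (by omega)]
            have hj : q - 1 - (i - p) = (q - 1 - (i + 1 - p)) + 1 := by omega
            rw [hj]
            rw [Finset.inter_comm]
            exact hq.adj _ (by omega)
    · -- gap condition
      intro i j hij hjL h2 hgapL
      by_cases h1 : j < p
      · rw [hge i (by omega), hge j h1]; exact hp.gap i j (by omega) h1
      · by_cases h0 : i < p
        · rw [hge i h0, hgf j (by omega) hjL]
          set j' := q - 1 - (j - p) with hj'
          rw [Finset.eq_empty_iff_forall_notMem]
          intro v hv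
          rcases Finset.mem_inter.1 hv with ⟨hv1, hv2⟩
          rcases hmix i j' h0 (by omega) v hv1 hv2 with h3 | h3
          · subst h3
            have h4 := hp.mem_only_a h0 hv1
            have h5 := hq.mem_only_a (by omega) hv2
            omega
          · subst h3
            have h4 := hp.mem_only_b h0 hv1
            have h5 := hq.mem_only_b (by omega) hv2
            omega
        · rw [hgf i (by omega) (by omega), hgf j (by omega) hjL]
          rw [Finset.inter_comm]
          exact hq.gap _ _ (by omega) (by omega)
  exact hforest ⟨_, a, ⟨pverts_subset hval hgE, by
      intro t ht; rcases mem_pedges.1 ht with ⟨i, hi, rfl⟩; exact hgE i hi, rfl⟩, L, hcyc⟩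


lemma pedges_singleton (e : ℕ → Finset V) : pedges e 1 = {e 0} := by
  simp [pedges]

lemma pedges_cover {e : ℕ → Finset V} {p k m : ℕ} (h1 : k < p) (h2 : m ≤ k + 1) :
    pedges e p = pedges e (k+1) ∪ pedges (fun i => e (m + i)) (p - m) := by
  ext t
  simp only [mem_pedges, Finset.mem_union]
  constructor
  · rintro ⟨i, hi, rfl⟩
    by_cases h : i ≤ k
    · exact Or.inl ⟨i, by omega, rfl⟩
    · refine Or.inr ⟨i - m, by omega, ?_⟩
      congr 1; omega
  · rintro (⟨i, hi, rfl⟩ | ⟨i, hi, rfl⟩)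
    · exact ⟨i, by omega, rfl⟩
    · exact ⟨m + i, by omega, rfl⟩

lemma pedges_append {e : ℕ → Finset V} {p : ℕ} (hp : 1 ≤ p) :
    pedges e p = insert (e (p-1)) (pedges e (p-1)) := by
  ext t
  simp only [mem_pedges, Finset.mem_insert]
  constructor
  · rintro ⟨i, hi, rfl⟩
    by_cases h : i = p - 1
    · exact Or.inl (by rw [h])
    · exact Or.inr ⟨i, by omega, rfl⟩
  · rintro (rfl | ⟨i, hi, rfl⟩)
    · exact ⟨p - 1, by omega, rfl⟩
    · exact ⟨i, by omega, rfl⟩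

lemma pedges_cons {e : ℕ → Finset V} {p : ℕ} (hp : 1 ≤ p) :
    pedges e p = insert (e 0) (pedges (fun i => e (1 + i)) (p-1)) := by
  ext t
  simp only [mem_pedges, Finset.mem_insert]
  constructor
  · rintro ⟨i, hi, rfl⟩
    by_cases h : i = 0
    · exact Or.inl (by rw [h])
    · refine Or.inr ⟨i - 1, by omega, ?_⟩; congr 1; omega
  · rintro (rfl | ⟨i, hi, rfl⟩)
    · exact ⟨0, by omega, rfl⟩
    · exact ⟨1 + i, by omega, rfl⟩

lemma four_in_three {g : Finset V} (hcard : g.card = 3) {w x y z' : V}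
    (hwg : w ∈ g) (hxg : x ∈ g) (hyg : y ∈ g) (hzg : z' ∈ g)
    (h1 : w ≠ x) (h2 : y ≠ w) (h3 : y ≠ x) (h4 : z' ≠ w) (h5 : z' ≠ x) : y = z' := by
  by_contra hc
  have hsub : ({w, x, y, z'} : Finset V) ⊆ g := by
    intro u hu
    simp only [Finset.mem_insert, Finset.mem_singleton] at hu
    rcases hu with rfl | rfl | rfl | rfl <;> assumption
  have hc4 : ({w, x, y, z'} : Finset V).card = 4 := by
    rw [Finset.card_insert_of_notMem (by simp [h1, Ne.symm h2, Ne.symm h4]),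
        Finset.card_insert_of_notMem (by simp [Ne.symm h3, Ne.symm h5]),
        Finset.card_insert_of_notMem (by simp [hc]), Finset.card_singleton]
  have := Finset.card_le_card hsub
  omega

lemma third_vertex {g : Finset V} (h3 : g.card = 3) {x m : V} (hx : x ∈ g) (hm : m ∈ g)
    (hxm : x ≠ m) : ∃ w, w ∈ g ∧ w ≠ x ∧ w ≠ m ∧ g = {x, m, w} := by
  have hsub : ({x, m} : Finset V) ⊆ g := by
    intro u hu; simp only [Finset.mem_insert, Finset.mem_singleton] at hu
    rcases hu with rfl | rfl <;> assumption
  have hc2 : ({x, m} : Finset V).card = 2 := by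
    rw [Finset.card_insert_of_notMem (by simp [hxm]), Finset.card_singleton]
  have hcd : (g \ {x, m}).card = 1 := by
    rw [Finset.card_sdiff_of_subset hsub]; omega
  obtain ⟨w, hw⟩ := Finset.card_eq_one.1 hcd
  have hwmem : w ∈ g \ ({x, m} : Finset V) := by rw [hw]; simp
  rw [Finset.mem_sdiff, Finset.mem_insert, Finset.mem_singleton] at hwmem
  refine ⟨w, hwmem.1, fun h => hwmem.2 (Or.inl h), fun h => hwmem.2 (Or.inr h), ?_⟩
  apply Finset.Subset.antisymm
  · intro u hu
    by_cases h : u ∈ ({x, m} : Finset V)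
    · simp only [Finset.mem_insert, Finset.mem_singleton] at h ⊢; tauto
    · have : u ∈ g \ ({x, m} : Finset V) := Finset.mem_sdiff.2 ⟨hu, h⟩
      rw [hw] at this
      simp only [Finset.mem_singleton] at this
      simp [this]
  · intro u hu
    simp only [Finset.mem_insert, Finset.mem_singleton] at hu
    rcases hu with rfl | rfl | rfl
    · exact hx
    · exact hm
    · exact hwmem.1

/-- Uniqueness of paths in a hyperforest: two paths with the same endpoints have the
same edge set. -/
lemma path_unique {H : MarkedHypergraph V} (hval : H.IsValid)
    (hforest : ¬ ∃ C c, MB.MarkedHypergraph.IsSub C H ∧ MB.IsCycle C c) :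
    ∀ (n : ℕ) (e f : ℕ → Finset V) (a z : V) (p q : ℕ), p + q ≤ n →
      PE e a z p → PE f a z q → EIn H e p → EIn H f q → pedges e p = pedges f q := by
  intro n
  induction n using Nat.strong_induction_on with
  | _ n IH =>
  intro e f a z p q hn hp hq he hf
  have hp1 := hp.pos
  have hq1 := hq.pos
  by_cases hsh : pverts e p ∩ pverts f q ⊆ {a, z}
  · exact (two_paths_false hval hforest hp hq he hf hsh).elim
  · obtain ⟨v, hv, hvaz⟩ := Finset.not_subset.1 hsh
    rcases Finset.mem_inter.1 hv with ⟨hvP, hvQ⟩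
    have hva : v ≠ a := fun h => hvaz (by simp [h])
    have hvz : v ≠ z := fun h => hvaz (by simp [h])
    obtain ⟨kP, hkP, hvkP, hminP⟩ := PE.exists_first hvP
    obtain ⟨iP, hiP, hviP, hmaxP⟩ := PE.exists_last hvP
    obtain ⟨kQ, hkQ, hvkQ, hminQ⟩ := PE.exists_first hvQ
    obtain ⟨iQ, hiQ, hviQ, hmaxQ⟩ := PE.exists_last hvQ
    have hkiP : kP ≤ iP := by by_contra hc; exact hminP iP (by omega) hviP
    have hkiQ : kQ ≤ iQ := by by_contra hc; exact hminQ iQ (by omega) hviQ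
    have hiP1 : iP ≤ kP + 1 := hp.occ_close hvkP hviP hkiP hiP
    have hiQ1 : iQ ≤ kQ + 1 := hq.occ_close hvkQ hviQ hkiQ hiQ
    have P1 : PE e a v (kP+1) := hp.prefix hkP hvkP hminP hva
    have P2 : PE (fun i => e (iP + i)) v z (p - iP) := hp.suffix hiP hviP hmaxP hvz
    have Q1 : PE f a v (kQ+1) := hq.prefix hkQ hvkQ hminQ hva
    have Q2 : PE (fun i => f (iQ + i)) v z (q - iQ) := hq.suffix hiQ hviQ hmaxQ hvz
    have heP1 : EIn H e (kP+1) := fun i hi => he i (by omega)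
    have heP2 : EIn H (fun i => e (iP + i)) (p - iP) := fun i hi => he _ (by omega)
    have hfQ1 : EIn H f (kQ+1) := fun i hi => hf i (by omega)
    have hfQ2 : EIn H (fun i => f (iQ + i)) (q - iQ) := fun i hi => hf _ (by omega)
    have hcovP : pedges e p = pedges e (kP+1) ∪ pedges (fun i => e (iP + i)) (p - iP) :=
      pedges_cover hkP hiP1
    have hcovQ : pedges f q = pedges f (kQ+1) ∪ pedges (fun i => f (iQ + i)) (q - iQ) :=
      pedges_cover hkQ hiQ1
    by_cases hA : (kP + 1) + (kQ + 1) < p + q ∧ (p - iP) + (q - iQ) < p + q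
    · have h1 := IH _ (by omega : (kP+1)+(kQ+1) < n) e f a v (kP+1) (kQ+1)
        (le_refl _) P1 Q1 heP1 hfQ1
      have h2 := IH _ (by omega : (p - iP)+(q - iQ) < n) _ _ v z (p - iP) (q - iQ)
        (le_refl _) P2 Q2 heP2 hfQ2
      rw [hcovP, hcovQ, h1, h2]
    · by_cases hB : p + q ≤ (kP + 1) + (kQ + 1)
      · -- v occurs only in the last edge of each path
        have hkPp : kP = p - 1 := by omega
        have hkQq : kQ = q - 1 := by omega
        have hiPp : iP = p - 1 := by omega
        have hiQq : iQ = q - 1 := by omega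
        by_cases hpq2 : p + q ≤ 2
        · -- p = q = 1 and e 0 = f 0 = {a, v, z}
          have hpe : p = 1 := by omega
          have hqe : q = 1 := by omega
          have havz : ({a, v, z} : Finset V).card = 3 := by
            rw [Finset.card_insert_of_notMem (by simp [Ne.symm hva, hp.ne]),
                Finset.card_insert_of_notMem (by simp [hvz]), Finset.card_singleton]
          have hePsub : ({a, v, z} : Finset V) ⊆ e 0 := by
            intro u hu
            simp only [Finset.mem_insert, Finset.mem_singleton] at hu
            rcases hu with rfl | rfl | rfl
            · exact hp.mema
            · rw [show (0:ℕ) = kP by omega]; exact hvkP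
            · have := hp.memb; rwa [hpe] at this
          have heQsub : ({a, v, z} : Finset V) ⊆ f 0 := by
            intro u hu
            simp only [Finset.mem_insert, Finset.mem_singleton] at hu
            rcases hu with rfl | rfl | rfl
            · exact hq.mema
            · rw [show (0:ℕ) = kQ by omega]; exact hvkQ
            · have := hq.memb; rwa [hqe] at this
          have he0 : e 0 = {a, v, z} :=
            (Finset.eq_of_subset_of_card_le hePsub (by rw [hp.card3 0 (by omega)]; omega)).symm
          have hf0 : f 0 = {a, v, z} :=
            (Finset.eq_of_subset_of_card_le heQsub (by rw [hq.card3 0 (by omega)]; omega)).symm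
          rw [hpe, hqe, pedges_singleton, pedges_singleton, he0, hf0]
        · -- p + q ≥ 3; the two last edges are equal
          have hlast := IH 2 (by omega) _ _ v z (p - iP) (q - iQ) (by omega) P2 Q2 heP2 hfQ2
          have hp2 : p - iP = 1 := by omega
          have hq2 : q - iQ = 1 := by omega
          rw [hp2, hq2, pedges_singleton, pedges_singleton] at hlast
          have hlast' : e (p-1) = f (q-1) := by
            have := Finset.mem_singleton.1 (hlast ▸ Finset.mem_singleton_self ((fun i => e (iP + i)) 0))
            simpa [hiPp, hiQq] using this
          by_cases hpe : p = 1
          · -- a ∈ e 0 = f (q-1), impossible since q ≥ 2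
            have hq2' : 2 ≤ q := by omega
            have : a ∈ f (q-1) := by
              rw [← hlast']; rw [show p - 1 = 0 by omega]; exact hp.mema
            have := hq.mem_only_a (by omega) this
            omega
          · by_cases hqe : q = 1
            · have hp2' : 2 ≤ p := by omega
              have : a ∈ e (p-1) := by
                rw [hlast']; rw [show q - 1 = 0 by omega]; exact hq.mema
              have := hp.mem_only_a (by omega) this
              omega
            · -- p, q ≥ 2: common back connector
              have hp2' : 2 ≤ p := by omega
              have hq2' : 2 ≤ q := by omega
              obtain ⟨c, hc⟩ := Finset.card_eq_one.1 (hp.adj (p-2) (by omega))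
              obtain ⟨c', hc'⟩ := Finset.card_eq_one.1 (hq.adj (q-2) (by omega))
              rw [show p - 2 + 1 = p - 1 by omega] at hc
              rw [show q - 2 + 1 = q - 1 by omega] at hc'
              have hcmem : c ∈ e (p-2) ∧ c ∈ e (p-1) := by
                have : c ∈ e (p-2) ∩ e (p-1) := by rw [hc]; simp
                exact Finset.mem_inter.1 this
              have hc'mem : c' ∈ f (q-2) ∧ c' ∈ f (q-1) := by
                have : c' ∈ f (q-2) ∩ f (q-1) := by rw [hc']; simp
                exact Finset.mem_inter.1 this
              have hcz : c ≠ z := by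
                intro h; subst h
                have := hp.mem_only_b (by omega : p - 2 < p) hcmem.1
                omega
              have hc'z : c' ≠ z := by
                intro h; subst h
                have := hq.mem_only_b (by omega : q - 2 < q) hc'mem.1
                omega
              have hcv : c ≠ v := by
                intro h; subst h
                exact hminP (p-2) (by omega) hcmem.1
              have hc'v : c' ≠ v := by
                intro h; subst h
                exact hminQ (q-2) (by omega) hc'mem.1
              have hzg : z ∈ e (p-1) := hp.memb
              have hvg : v ∈ e (p-1) := by rw [show p - 1 = kP by omega]; exact hvkP
              have hc'g : c' ∈ e (p-1) := by rw [hlast']; exact hc'mem.2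
              have hcc' : c = c' :=
                four_in_three (hp.card3 (p-1) (by omega)) hzg hvg hcmem.2 hc'g
                  hvz.symm hcz hcv hc'z hc'v
              -- common front parts
              have Pf : PE e a c (p-1) := by
                have := hp.prefix (k := p-2) (by omega) hcmem.1 (fun j hj hcj => by
                  have := hp.occ_close hcj hcmem.2 (by omega) (by omega); omega)
                  (fun h => by
                    have h0 := hp.mem_only_a (by omega : p - 2 < p) (h ▸ hcmem.1)
                    have h1 := hp.mem_only_a (by omega : p - 1 < p) (h ▸ hcmem.2)
                    omega)
                rwa [show p - 2 + 1 = p - 1 by omega] at this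
              have Qf : PE f a c (q-1) := by
                have := hq.prefix (k := q-2) (by omega) (hcc' ▸ hc'mem.1) (fun j hj hcj => by
                  have := hq.occ_close hcj (hcc' ▸ hc'mem.2) (by omega) (by omega); omega)
                  (fun h => by
                    have h0 := hq.mem_only_a (by omega : q - 2 < q) (h ▸ hcc' ▸ hc'mem.1)
                    have h1 := hq.mem_only_a (by omega : q - 1 < q) (h ▸ hcc' ▸ hc'mem.2)
                    omega)
                rwa [show q - 2 + 1 = q - 1 by omega] at this
              have hfr := IH _ (by omega : (p-1)+(q-1) < n) e f a c (p-1) (q-1)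
                (le_refl _) Pf Qf (fun i hi => he i (by omega)) (fun i hi => hf i (by omega))
              rw [pedges_append hp1, pedges_append hq1, hfr, hlast']
      · -- v occurs only in the first edge of each path
        have hiP0 : iP = 0 := by omega
        have hiQ0 : iQ = 0 := by omega
        have hkP0 : kP = 0 := by omega
        have hkQ0 : kQ = 0 := by omega
        have hpq3 : 3 ≤ p + q := by omega
        have hfirst := IH 2 (by omega) e f a v (kP+1) (kQ+1) (by omega) P1 Q1 heP1 hfQ1
        rw [hkP0, hkQ0, pedges_singleton, pedges_singleton] at hfirst
        have hef0 : e 0 = f 0 := by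
          simpa using Finset.mem_singleton.1 (hfirst ▸ Finset.mem_singleton_self (e 0))
        by_cases hpe : p = 1
        · have : z ∈ f 0 := by
            rw [← hef0]
            have := hp.memb; rwa [show p - 1 = 0 by omega] at this
          have := hq.mem_only_b (by omega : 0 < q) this
          omega
        · by_cases hqe : q = 1
          · have : z ∈ e 0 := by
              rw [hef0]
              have := hq.memb; rwa [show q - 1 = 0 by omega] at this
            have := hp.mem_only_b (by omega : 0 < p) this
            omega
          · have hp2' : 2 ≤ p := by omega
            have hq2' : 2 ≤ q := by omega
            obtain ⟨c, hc⟩ := Finset.card_eq_one.1 (hp.adj 0 (by omega))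
            obtain ⟨c', hc'⟩ := Finset.card_eq_one.1 (hq.adj 0 (by omega))
            have hcmem : c ∈ e 0 ∧ c ∈ e 1 := by
              have : c ∈ e 0 ∩ e 1 := by rw [hc]; simp
              exact Finset.mem_inter.1 this
            have hc'mem : c' ∈ f 0 ∧ c' ∈ f 1 := by
              have : c' ∈ f 0 ∩ f 1 := by rw [hc']; simp
              exact Finset.mem_inter.1 this
            have hca : c ≠ a := by
              intro h; subst h
              have := hp.mem_only_a (by omega : 1 < p) hcmem.2
              omega
            have hc'a : c' ≠ a := by
              intro h; subst h
              have := hq.mem_only_a (by omega : 1 < q) hc'mem.2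
              omega
            have hcv : c ≠ v := by
              intro h; subst h
              exact hmaxP 1 (by omega) (by omega) hcmem.2
            have hc'v : c' ≠ v := by
              intro h; subst h
              exact hmaxQ 1 (by omega) (by omega) hc'mem.2
            have hag : a ∈ e 0 := hp.mema
            have hvg : v ∈ e 0 := by rw [show (0:ℕ) = kP by omega]; exact hvkP
            have hc'g : c' ∈ e 0 := by rw [hef0]; exact hc'mem.1
            have hcc' : c = c' :=
              four_in_three (hp.card3 0 (by omega)) hag hvg hcmem.1 hc'g
                hva.symm hca hcv hc'a hc'v
            have Pt : PE (fun i => e (1 + i)) c z (p-1) := by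
              have := hp.suffix (k := 1) (by omega) hcmem.2 (fun j hj hjp hcj => by
                have := hp.occ_close hcmem.1 hcj (by omega) hjp; omega)
                (fun h => by
                  have := hp.mem_only_b (by omega : (0:ℕ) < p) (h ▸ hcmem.1)
                  omega)
              rwa [show p - 1 = p - 1 by rfl] at this
            have Qt : PE (fun i => f (1 + i)) c z (q-1) := by
              have := hq.suffix (k := 1) (by omega) (hcc' ▸ hc'mem.2) (fun j hj hjq hcj => by
                have := hq.occ_close (hcc' ▸ hc'mem.1) hcj (by omega) hjq; omega)
                (fun h => by
                  have := hq.mem_only_b (by omega : (0:ℕ) < q) (h ▸ hcc' ▸ hc'mem.1)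
                  omega)
              rwa [show q - 1 = q - 1 by rfl] at this
            have htl := IH _ (by omega : (p-1)+(q-1) < n) _ _ c z (p-1) (q-1)
              (le_refl _) Pt Qt (fun i hi => he _ (by omega)) (fun i hi => hf _ (by omega))
            rw [pedges_cons hp1, pedges_cons hq1, htl, hef0]

/-- A nunchaku in `H`, in indexed form. -/
def NunE (H : MarkedHypergraph V) (e : ℕ → Finset V) (a b : V) (L : ℕ) : Prop :=
  PE e a b L ∧ EIn H e L ∧ pverts e L ∩ H.marked = {a, b}

/-- An `x`-snake in `H` (with `x` unmarked), in indexed form. -/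
def SnE (H : MarkedHypergraph V) (x : V) (e : ℕ → Finset V) (m : V) (L : ℕ) : Prop :=
  PE e x m L ∧ EIn H e L ∧ pverts e L ∩ H.marked = {m}

lemma mem_pverts_of_mem {e : ℕ → Finset V} {L i : ℕ} {v : V} (hi : i < L) (hv : v ∈ e i) :
    v ∈ pverts e L := mem_pverts.2 ⟨i, hi, hv⟩

lemma SnE.marked_m {H : MarkedHypergraph V} {x : V} {e : ℕ → Finset V} {m : V} {L : ℕ}
    (h : SnE H x e m L) : m ∈ H.marked := by
  have : m ∈ pverts e L ∩ H.marked := by rw [h.2.2]; simp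
  exact (Finset.mem_inter.1 this).2

/-- Gluing a reversed snake and a snake sharing only the start `x` into a nunchaku. -/
lemma glueA {H : MarkedHypergraph V} {x : V} (hxm : x ∉ H.marked)
    {es fs : ℕ → Finset V} {ms ms' : V} {s t : ℕ}
    (hσ : SnE H x es ms s) (hτ : SnE H x fs ms' t)
    (hsh : ∀ z, z ∈ pverts es s → z ∈ pverts fs t → z = x) :
    NunE H (fun i => if i < s then es (s - 1 - i) else fs (i - s)) ms ms' (s + t) := by
  obtain ⟨hp, he, hm⟩ := hσ
  obtain ⟨hq, hf, hm'⟩ := hτ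
  have hs1 := hp.pos
  have ht1 := hq.pos
  have hmsM : ms ∈ H.marked := SnE.marked_m ⟨hp, he, hm⟩
  have hms'M : ms' ∈ H.marked := SnE.marked_m ⟨hq, hf, hm'⟩
  have hmsv : ms ∈ pverts es s := mem_pverts_of_mem (by omega) hp.memb
  have hms'v : ms' ∈ pverts fs t := mem_pverts_of_mem (by omega) hq.memb
  set g : ℕ → Finset V := fun i => if i < s then es (s - 1 - i) else fs (i - s) with hg
  have hge : ∀ i, i < s → g i = es (s - 1 - i) := fun i hi => by simp [hg, hi]
  have hgf : ∀ i, s ≤ i → g i = fs (i - s) := fun i hi => by simp [hg, Nat.not_lt.2 hi]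
  have hne : ms ≠ ms' := by
    intro hh
    have : ms = x := hsh ms hmsv (hh ▸ hms'v)
    rw [this] at hmsM; exact hxm hmsM
  have hpv : pverts g (s + t) = pverts es s ∪ pverts fs t := by
    ext v
    simp only [mem_pverts, Finset.mem_union]
    constructor
    · rintro ⟨i, hi, hv⟩
      by_cases h' : i < s
      · rw [hge i h'] at hv; exact Or.inl ⟨s - 1 - i, by omega, hv⟩
      · rw [hgf i (by omega)] at hv; exact Or.inr ⟨i - s, by omega, hv⟩
    · rintro (⟨i, hi, hv⟩ | ⟨i, hi, hv⟩)
      · refine ⟨s - 1 - i, by omega, ?_⟩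
        rw [hge _ (by omega), show s - 1 - (s - 1 - i) = i by omega]; exact hv
      · refine ⟨s + i, by omega, ?_⟩
        rw [hgf _ (by omega), show s + i - s = i by omega]; exact hv
  have hPE : PE g ms ms' (s + t) := by
    refine ⟨by omega, hne, ?_, ?_, ?_, ?_, ?_, ?_, ?_, ?_⟩
    · intro i hi
      by_cases h' : i < s
      · rw [hge i h']; exact hp.card3 _ (by omega)
      · rw [hgf i (by omega)]; exact hq.card3 _ (by omega)
    · intro i j hi hj hij
      by_cases h1 : i < s <;> by_cases h2 : j < s
      · rw [hge i h1, hge j h2]; exact hp.inj _ _ (by omega) (by omega) (by omega)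
      · rw [hge i h1, hgf j (by omega)]
        intro hc
        have hsub : es (s - 1 - i) ⊆ {x} := by
          intro v hv
          have h3 : v ∈ pverts fs t := mem_pverts_of_mem (by omega) (hc ▸ hv)
          simp [hsh v (mem_pverts_of_mem (by omega) hv) h3]
        have h4 := Finset.card_le_card hsub
        have h5 := hp.card3 (s - 1 - i) (by omega)
        rw [Finset.card_singleton] at h4
        omega
      · rw [hgf i (by omega), hge j h2]
        intro hc
        have hsub : es (s - 1 - j) ⊆ {x} := by
          intro v hv
          have h3 : v ∈ pverts fs t := mem_pverts_of_mem (by omega) (hc ▸ hv)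
          simp [hsh v (mem_pverts_of_mem (by omega) hv) h3]
        have h4 := Finset.card_le_card hsub
        have h5 := hp.card3 (s - 1 - j) (by omega)
        rw [Finset.card_singleton] at h4
        omega
      · rw [hgf i (by omega), hgf j (by omega)]
        exact hq.inj _ _ (by omega) (by omega) (by omega)
    · rw [hge 0 (by omega)]; exact hp.memb
    · rw [hgf (s + t - 1) (by omega), show s + t - 1 - s = t - 1 by omega]; exact hq.memb
    · intro i hi
      by_cases h' : i + 1 < s
      · rw [hge i (by omega), hge (i+1) h']
        rw [show s - 1 - i = (s - 1 - (i+1)) + 1 by omega, Finset.inter_comm]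
        exact hp.adj _ (by omega)
      · by_cases h2 : i < s
        · -- gluing point
          rw [hge i h2, hgf (i+1) (by omega), show s - 1 - i = 0 by omega,
              show i + 1 - s = 0 by omega]
          rw [Finset.card_eq_one]
          refine ⟨x, Finset.Subset.antisymm ?_ ?_⟩
          · intro v hv
            rcases Finset.mem_inter.1 hv with ⟨h3, h4⟩
            simp [hsh v (mem_pverts_of_mem (by omega) h3) (mem_pverts_of_mem (by omega) h4)]
          · simp only [Finset.singleton_subset_iff]
            exact Finset.mem_inter.2 ⟨hp.mema, hq.mema⟩
        · rw [hgf i (by omega), hgf (i+1) (by omega), show i + 1 - s = (i - s) + 1 by omega]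
          exact hq.adj _ (by omega)
    · intro i j hij hj
      by_cases h2 : j < s
      · rw [hge i (by omega), hge j h2, Finset.inter_comm]
        exact hp.gap _ _ (by omega) (by omega)
      · by_cases h1 : i < s
        · rw [hge i h1, hgf j (by omega)]
          rw [Finset.eq_empty_iff_forall_notMem]
          intro v hv
          rcases Finset.mem_inter.1 hv with ⟨h3, h4⟩
          have hvx : v = x := hsh v (mem_pverts_of_mem (by omega) h3)
            (mem_pverts_of_mem (by omega) h4)
          subst hvx
          have h5 := hp.mem_only_a (by omega : s - 1 - i < s) h3
          have h6 := hq.mem_only_a (by omega : j - s < t) h4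
          omega
        · rw [hgf i (by omega), hgf j (by omega)]
          exact hq.gap _ _ (by omega) (by omega)
    · intro i h1 hi
      by_cases h' : i < s
      · rw [hge i h']
        intro hc
        have := hp.mem_only_b (by omega : s - 1 - i < s) hc
        omega
      · rw [hgf i (by omega)]
        intro hc
        have : ms = x := hsh ms hmsv (mem_pverts_of_mem (by omega) hc)
        rw [this] at hmsM; exact hxm hmsM
    · intro i hi
      by_cases h' : i < s
      · rw [hge i h']
        intro hc
        have : ms' = x := hsh ms' (mem_pverts_of_mem (by omega) hc) hms'v
        rw [this] at hms'M; exact hxm hms'M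
      · rw [hgf i (by omega)]
        exact hq.bnotin _ (by omega)
  refine ⟨hPE, ?_, ?_⟩
  · intro i hi
    by_cases h' : i < s
    · rw [hge i h']; exact he _ (by omega)
    · rw [hgf i (by omega)]; exact hf _ (by omega)
  · rw [hpv, Finset.union_inter_distrib_right, hm, hm']
    ext v
    simp only [Finset.mem_union, Finset.mem_singleton, Finset.mem_insert]

/-- Gluing a reversed snake and a snake sharing their first edge into a nunchaku. -/
lemma glueB {H : MarkedHypergraph V} {x : V} (hxm : x ∉ H.marked)
    {es fs : ℕ → Finset V} {ms ms' u : V} {s t : ℕ} (hs2 : 2 ≤ s)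
    (hσ : SnE H x es ms s) (hτ : SnE H x fs ms' t) (hf0 : fs 0 = es 0)
    (hsh : ∀ z, z ∈ pverts es s → z ∈ pverts fs t → z ∈ es 0)
    (hu : es 0 ∩ es 1 = {u}) (hut : u ∉ pverts fs t) :
    NunE H (fun i => if i < s then es (s - 1 - i) else fs (i - s + 1)) ms ms' (s + t - 1) := by
  obtain ⟨hp, he, hm⟩ := hσ
  obtain ⟨hq, hf, hm'⟩ := hτ
  have hs1 := hp.pos
  have ht1 := hq.pos
  have hmsM : ms ∈ H.marked := SnE.marked_m ⟨hp, he, hm⟩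
  have hms'M : ms' ∈ H.marked := SnE.marked_m ⟨hq, hf, hm'⟩
  have hmsv : ms ∈ pverts es s := mem_pverts_of_mem (by omega) hp.memb
  have hms'v : ms' ∈ pverts fs t := mem_pverts_of_mem (by omega) hq.memb
  have hms0 : ms ∉ es 0 := fun hc => by have := hp.mem_only_b (by omega : 0 < s) hc; omega
  have hne : ms ≠ ms' := fun hh => hms0 (hsh ms hmsv (hh ▸ hms'v))
  -- membership in es 0 and in a tail edge of σ forces the vertex to be u
  have hesu : ∀ z i, 1 ≤ i → i < s → z ∈ es 0 → z ∈ es i → z = u := by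
    intro z i h1 h2 hz0 hzi
    have hii := hp.occ_close hz0 hzi (by omega) h2
    have : i = 1 := by omega
    subst this
    have : z ∈ es 0 ∩ es 1 := Finset.mem_inter.2 ⟨hz0, hzi⟩
    rw [hu] at this; simpa using this
  -- a shared vertex in a tail edge of σ is u (hence not in pverts fs t)
  have hshtail : ∀ z i, 1 ≤ i → i < s → z ∈ es i → z ∉ pverts fs t := by
    intro z i h1 h2 hzi hzf
    have hz0 : z ∈ es 0 := hsh z (mem_pverts_of_mem h2 hzi) hzf
    exact hut ((hesu z i h1 h2 hz0 hzi) ▸ hzf)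
  -- ms' not in fs 0 unless t = 1
  set g : ℕ → Finset V := fun i => if i < s then es (s - 1 - i) else fs (i - s + 1) with hg
  have hge : ∀ i, i < s → g i = es (s - 1 - i) := fun i hi => by simp [hg, hi]
  have hgf : ∀ i, s ≤ i → g i = fs (i - s + 1) := fun i hi => by simp [hg, Nat.not_lt.2 hi]
  have hpv : pverts g (s + t - 1) = pverts es s ∪ pverts fs t := by
    ext v
    simp only [mem_pverts, Finset.mem_union]
    constructor
    · rintro ⟨i, hi, hv⟩
      by_cases h' : i < s
      · rw [hge i h'] at hv; exact Or.inl ⟨s - 1 - i, by omega, hv⟩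
      · rw [hgf i (by omega)] at hv; exact Or.inr ⟨i - s + 1, by omega, hv⟩
    · rintro (⟨i, hi, hv⟩ | ⟨i, hi, hv⟩)
      · refine ⟨s - 1 - i, by omega, ?_⟩
        rw [hge _ (by omega), show s - 1 - (s - 1 - i) = i by omega]; exact hv
      · by_cases h0 : i = 0
        · refine ⟨s - 1, by omega, ?_⟩
          rw [hge _ (by omega), show s - 1 - (s - 1) = 0 by omega, ← hf0, ← h0]; exact hv
        · refine ⟨s + i - 1, by omega, ?_⟩
          rw [hgf _ (by omega), show s + i - 1 - s + 1 = i by omega]; exact hv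
  have hPE : PE g ms ms' (s + t - 1) := by
    refine ⟨by omega, hne, ?_, ?_, ?_, ?_, ?_, ?_, ?_, ?_⟩
    · intro i hi
      by_cases h' : i < s
      · rw [hge i h']; exact hp.card3 _ (by omega)
      · rw [hgf i (by omega)]; exact hq.card3 _ (by omega)
    · intro i j hi hj hij
      -- mixed case helper
      have hmix : ∀ i' j', i' < s → 1 ≤ j' → j' < t → es (s - 1 - i') ≠ fs j' := by
        intro i' j' hi' hj1 hj2 hc
        by_cases h0 : s - 1 - i' = 0
        · rw [h0] at hc
          have : x ∈ fs j' := hc ▸ hp.mema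
          exact hq.anotin j' hj1 hj2 this
        · -- every vertex of es (s-1-i') is u : impossible since card = 3
          have hsub : es (s - 1 - i') ⊆ {u} := by
            intro v hv
            have hvf : v ∈ pverts fs t := mem_pverts_of_mem hj2 (hc ▸ hv)
            have hv0 : v ∈ es 0 := hsh v (mem_pverts_of_mem (by omega) hv) hvf
            simp [hesu v (s - 1 - i') (by omega) (by omega) hv0 hv]
          have h4 := Finset.card_le_card hsub
          have h5 := hp.card3 (s - 1 - i') (by omega)
          rw [Finset.card_singleton] at h4
          omega
      by_cases h1 : i < s <;> by_cases h2 : j < s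
      · rw [hge i h1, hge j h2]; exact hp.inj _ _ (by omega) (by omega) (by omega)
      · rw [hge i h1, hgf j (by omega)]; exact hmix i _ h1 (by omega) (by omega)
      · rw [hgf i (by omega), hge j h2]
        exact (hmix j _ h2 (by omega) (by omega)).symm
      · rw [hgf i (by omega), hgf j (by omega)]
        exact hq.inj _ _ (by omega) (by omega) (by omega)
    · rw [hge 0 (by omega)]; exact hp.memb
    · by_cases ht2 : 2 ≤ t
      · rw [hgf (s + t - 1 - 1) (by omega), show s + t - 1 - 1 - s + 1 = t - 1 by omega]
        exact hq.memb
      · have : t = 1 := by omega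
        rw [hge (s + t - 1 - 1) (by omega), show s - 1 - (s + t - 1 - 1) = 0 by omega, ← hf0]
        have := hq.memb
        rwa [show t - 1 = 0 by omega] at this
    · intro i hi
      by_cases h' : i + 1 < s
      · rw [hge i (by omega), hge (i+1) h']
        rw [show s - 1 - i = (s - 1 - (i+1)) + 1 by omega, Finset.inter_comm]
        exact hp.adj _ (by omega)
      · by_cases h2 : i < s
        · rw [hge i h2, hgf (i+1) (by omega), show s - 1 - i = 0 by omega,
              show i + 1 - s + 1 = 1 by omega, ← hf0]
          exact hq.adj 0 (by omega)
        · rw [hgf i (by omega), hgf (i+1) (by omega),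
              show i + 1 - s + 1 = (i - s + 1) + 1 by omega]
          exact hq.adj _ (by omega)
    · intro i j hij hj
      by_cases h2 : j < s
      · rw [hge i (by omega), hge j h2, Finset.inter_comm]
        exact hp.gap _ _ (by omega) (by omega)
      · by_cases h1 : i < s
        · rw [hge i h1, hgf j (by omega)]
          rw [Finset.eq_empty_iff_forall_notMem]
          intro v hv
          rcases Finset.mem_inter.1 hv with ⟨h3, h4⟩
          by_cases h0 : s - 1 - i = 0
          · -- es 0 = fs 0 vs fs (j - s + 1) with j - s + 1 ≥ 2 : gap of τ
            rw [h0] at h3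
            have h3' : v ∈ fs 0 := by rw [hf0]; exact h3
            have : fs 0 ∩ fs (j - s + 1) = ∅ := hq.gap 0 _ (by omega) (by omega)
            have : v ∈ fs 0 ∩ fs (j - s + 1) := Finset.mem_inter.2 ⟨h3', h4⟩
            simp_all
          · exact hshtail v (s - 1 - i) (by omega) (by omega) h3
              (mem_pverts_of_mem (by omega) h4)
        · rw [hgf i (by omega), hgf j (by omega)]
          exact hq.gap _ _ (by omega) (by omega)
    · intro i h1 hi
      by_cases h' : i < s
      · rw [hge i h']
        intro hc
        have := hp.mem_only_b (by omega : s - 1 - i < s) hc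
        omega
      · rw [hgf i (by omega)]
        intro hc
        have : ms ∈ es 0 := hsh ms hmsv (mem_pverts_of_mem (by omega) hc)
        exact hms0 this
    · intro i hi
      by_cases h' : i < s
      · rw [hge i h']
        intro hc
        have hc0 : ms' ∈ es 0 := hsh ms' (mem_pverts_of_mem (by omega) hc) hms'v
        by_cases ht2 : 2 ≤ t
        · have : ms' ∈ fs 0 := by rw [hf0]; exact hc0
          have := hq.mem_only_b (by omega : 0 < t) this
          omega
        · -- t = 1 : then i + 1 < s, so the σ-index is ≥ 1 and ms' = u, contradiction
          have hti : t = 1 := by omega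
          have hidx : 1 ≤ s - 1 - i := by omega
          have := hesu ms' (s - 1 - i) hidx (by omega) hc0 hc
          exact hut (this ▸ hms'v)
      · rw [hgf i (by omega)]
        exact hq.bnotin _ (by omega)
  refine ⟨hPE, ?_, ?_⟩
  · intro i hi
    by_cases h' : i < s
    · rw [hge i h']; exact he _ (by omega)
    · rw [hgf i (by omega)]; exact hf _ (by omega)
  · rw [hpv, Finset.union_inter_distrib_right, hm, hm']
    ext v
    simp only [Finset.mem_union, Finset.mem_singleton, Finset.mem_insert]

/-- Comparing the prefixes of two snakes from `x` up to a common vertex `z`. -/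
lemma prefix_compare {H : MarkedHypergraph V} (hval : H.IsValid)
    (hforest : ¬ ∃ C c, MB.MarkedHypergraph.IsSub C H ∧ MB.IsCycle C c)
    {es fs : ℕ → Finset V} {x m m' z : V} {s t : ℕ}
    (hp : PE es x m s) (hq : PE fs x m' t) (he : EIn H es s) (hf : EIn H fs t)
    (hz1 : z ∈ pverts es s) (hz2 : z ∈ pverts fs t) (hzx : z ≠ x) :
    ∃ k k', k < s ∧ k' < t ∧ z ∈ es k ∧ (∀ j, j < k → z ∉ es j) ∧
      pedges es (k+1) = pedges fs (k'+1) := by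
  obtain ⟨k, hk, hzk, hmin⟩ := PE.exists_first hz1
  obtain ⟨k', hk', hzk', hmin'⟩ := PE.exists_first hz2
  have P1 : PE es x z (k+1) := hp.prefix hk hzk hmin hzx
  have Q1 : PE fs x z (k'+1) := hq.prefix hk' hzk' hmin' hzx
  have := path_unique hval hforest ((k+1)+(k'+1)) es fs x z (k+1) (k'+1) le_rfl P1 Q1
    (fun i hi => he i (by omega)) (fun i hi => hf i (by omega))
  exact ⟨k, k', hk, hk', hzk, hmin, this⟩

/-- Breaker's key move: a vertex `y` meeting every short `x`-snake. -/
lemma breaker_choice {H : MarkedHypergraph V} (hval : H.IsValid)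
    (hforest : ¬ ∃ C c, MB.MarkedHypergraph.IsSub C H ∧ MB.IsCycle C c)
    {x : V} (hx : x ∈ H.verts) (hxm : x ∉ H.marked) {S : ℕ}
    (hnun : ∀ e a b ℓ, NunE H e a b ℓ → 2 * S - 1 ≤ ℓ ∧ 2 ≤ ℓ)
    (hbig : 2 ≤ (H.verts \ H.marked).card) :
    ∃ y, y ∈ H.verts ∧ y ∉ H.marked ∧ y ≠ x ∧
      ∀ e m ℓ, SnE H x e m ℓ → ℓ < S → y ∈ pverts e ℓ := by
  by_cases hshort : ∃ e m ℓ, (SnE H x e m ℓ ∧ ℓ < S)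
  · obtain ⟨es, ms, s, hσ, hsS⟩ := hshort
    have hp := hσ.1
    have he := hσ.2.1
    have hm := hσ.2.2
    have hs1 := hp.pos
    have hS2 : 2 ≤ S := by omega
    by_cases hs2 : 2 ≤ s
    · -- y := the connector of the first two edges of σ
      obtain ⟨u, hu⟩ := Finset.card_eq_one.1 (hp.adj 0 (by omega))
      have humem : u ∈ es 0 ∧ u ∈ es 1 := by
        have : u ∈ es 0 ∩ es 1 := by rw [hu]; simp
        exact Finset.mem_inter.1 this
      have hux : u ≠ x := by
        intro h; exact hp.anotin 1 (by omega) (by omega) (h ▸ humem.2)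
      have huM : u ∉ H.marked := by
        intro hc
        have : u ∈ pverts es s ∩ H.marked :=
          Finset.mem_inter.2 ⟨mem_pverts_of_mem (by omega) humem.1, hc⟩
        rw [hm] at this
        have : u = ms := by simpa using this
        subst this
        have := hp.mem_only_b (by omega : (0:ℕ) < s) humem.1
        omega
      refine ⟨u, (hval.2.1 _ (he 1 (by omega))).1 humem.2, huM, hux, ?_⟩
      intro fs m' t hτ htS
      by_contra hu'
      by_cases hz : ∃ z, z ∈ pverts es s ∧ z ∈ pverts fs t ∧ z ∉ es 0
      · obtain ⟨z, hz1, hz2, hz0⟩ := hz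
        have hzx : z ≠ x := fun h => hz0 (h ▸ hp.mema)
        obtain ⟨k, k', hk, hk', hzk, hmin, heq⟩ :=
          prefix_compare hval hforest hp hτ.1 he hτ.2.1 hz1 hz2 hzx
        have hk1 : 1 ≤ k := by
          rcases Nat.eq_zero_or_pos k with h0 | h0
          · exact absurd (h0 ▸ hzk) hz0
          · omega
        have h1 : es 1 ∈ pedges fs (k'+1) := heq ▸ mem_pedges.2 ⟨1, by omega, rfl⟩
        obtain ⟨j, hj, hjeq⟩ := mem_pedges.1 h1
        exact hu' (mem_pverts_of_mem (by omega : j < t) (hjeq ▸ humem.2))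
      · have hsh0 : ∀ z, z ∈ pverts es s → z ∈ pverts fs t → z ∈ es 0 := by
          intro z h1 h2; by_contra hc; exact hz ⟨z, h1, h2, hc⟩
        by_cases hf0 : fs 0 = es 0
        · have hN := glueB hxm hs2 hσ hτ hf0 hsh0 hu hu'
          have := hnun _ _ _ _ hN
          omega
        · have hsh : ∀ z, z ∈ pverts es s → z ∈ pverts fs t → z = x := by
            intro z h1 h2
            by_contra hzx
            obtain ⟨k, k', hk, hk', hzk, hmin, heq⟩ :=
              prefix_compare hval hforest hp hτ.1 he hτ.2.1 h1 h2 hzx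
            have h1' : es 0 ∈ pedges fs (k'+1) := heq ▸ mem_pedges.2 ⟨0, by omega, rfl⟩
            obtain ⟨j, hj, hjeq⟩ := mem_pedges.1 h1'
            have hxj : x ∈ fs j := hjeq ▸ hp.mema
            have hj0 := hτ.1.mem_only_a (by omega : j < t) hxj
            exact hf0 (by rw [← hjeq, hj0])
          have hN := glueA hxm hσ hτ hsh
          have := hnun _ _ _ _ hN
          omega
    · -- s = 1 : y := the third vertex of the unique edge of σ
      have hs1' : s = 1 := by omega
      have hmsmem : ms ∈ es 0 := by
        have := hp.memb; rwa [show s - 1 = 0 by omega] at this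
      obtain ⟨w, hwmem, hwx, hwm, hgeq⟩ :=
        third_vertex (hp.card3 0 (by omega)) hp.mema hmsmem hp.ne
      have hwM : w ∉ H.marked := by
        intro hc
        have : w ∈ pverts es s ∩ H.marked :=
          Finset.mem_inter.2 ⟨mem_pverts_of_mem (by omega) hwmem, hc⟩
        rw [hm] at this
        exact hwm (by simpa using this)
      refine ⟨w, (hval.2.1 _ (he 0 (by omega))).1 hwmem, hwM, hwx, ?_⟩
      intro fs m' t hτ htS
      by_contra hw'
      by_cases hz : ∃ z, z ∈ pverts es s ∧ z ∈ pverts fs t ∧ z ≠ x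
      · obtain ⟨z, hz1, hz2, hzx⟩ := hz
        obtain ⟨k, k', hk, hk', hzk, hmin, heq⟩ :=
          prefix_compare hval hforest hp hτ.1 he hτ.2.1 hz1 hz2 hzx
        have h1' : es 0 ∈ pedges fs (k'+1) := heq ▸ mem_pedges.2 ⟨0, by omega, rfl⟩
        obtain ⟨j, hj, hjeq⟩ := mem_pedges.1 h1'
        exact hw' (mem_pverts_of_mem (by omega : j < t) (hjeq ▸ hwmem))
      · have hsh : ∀ z, z ∈ pverts es s → z ∈ pverts fs t → z = x := by
          intro z h1 h2; by_contra hc; exact hz ⟨z, h1, h2, hc⟩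
        have hN := glueA hxm hσ hτ hsh
        have := hnun _ _ _ _ hN
        omega
  · obtain ⟨y, hy, hyx⟩ := Finset.exists_mem_ne (s := H.verts \ H.marked) (by omega) x
    rw [Finset.mem_sdiff] at hy
    refine ⟨y, hy.1, hy.2, hyx, ?_⟩
    intro e m ℓ hsn hℓ
    exact absurd ⟨e, m, ℓ, hsn, hℓ⟩ hshort

lemma pverts_reverse {e : ℕ → Finset V} {L : ℕ} :
    pverts (fun i => e (L - 1 - i)) L = pverts e L := by
  ext v
  simp only [mem_pverts]
  constructor
  · rintro ⟨i, hi, hv⟩; exact ⟨L - 1 - i, by omega, hv⟩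
  · rintro ⟨i, hi, hv⟩
    refine ⟨L - 1 - i, by omega, ?_⟩
    rw [show L - 1 - (L - 1 - i) = i by omega]; exact hv

lemma nun_minus {H : MarkedHypergraph V} {x y : V} (hxm : x ∉ H.marked)
    (hym : y ∉ H.marked) (hyx : y ≠ x) {e : ℕ → Finset V} {a b : V} {ℓ : ℕ}
    (hN : NunE ((H.plus x).minus y) e a b ℓ) :
    (NunE H e a b ℓ) ∨ (SnE H x e b ℓ ∧ a = x) ∨
      (SnE H x (fun i => e (ℓ - 1 - i)) a ℓ ∧ b = x) := by
  obtain ⟨hPE, hEIn, hmk⟩ := hN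
  have hL := hPE.pos
  have hab := hPE.ne
  have hEIn' : EIn H e ℓ := fun i hi => (Finset.mem_filter.1 (hEIn i hi)).1
  have hyno : ∀ i, i < ℓ → y ∉ e i := fun i hi => (Finset.mem_filter.1 (hEIn i hi)).2
  have hypv : y ∉ pverts e ℓ := by
    intro hc; rcases mem_pverts.1 hc with ⟨i, hi, hv⟩; exact hyno i hi hv
  have hmk' : pverts e ℓ ∩ insert x H.marked = {a, b} := by
    rw [← hmk]
    ext v
    simp only [Finset.mem_inter, minus, plus, Finset.mem_erase]
    constructor
    · rintro ⟨h1, h2⟩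
      exact ⟨h1, fun hveq => hypv (hveq ▸ h1), h2⟩
    · rintro ⟨h1, _, h2⟩; exact ⟨h1, h2⟩
  have hapv : a ∈ pverts e ℓ := mem_pverts_of_mem (by omega) hPE.mema
  have hbpv : b ∈ pverts e ℓ := mem_pverts_of_mem (by omega) hPE.memb
  by_cases hxpv : x ∈ pverts e ℓ
  · have hxab : x = a ∨ x = b := by
      have : x ∈ pverts e ℓ ∩ insert x H.marked :=
        Finset.mem_inter.2 ⟨hxpv, Finset.mem_insert_self _ _⟩
      rw [hmk'] at this
      simpa using this
    rcases hxab with hxa | hxb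
    · -- a = x : e is an x-snake ending at b
      have hbM : b ∈ H.marked := by
        have : b ∈ pverts e ℓ ∩ insert x H.marked := by rw [hmk']; simp
        have h2 := (Finset.mem_inter.1 this).2
        rcases Finset.mem_insert.1 h2 with h3 | h3
        · exact absurd (hxa ▸ h3) hab.symm
        · exact h3
      have hmk2 : pverts e ℓ ∩ H.marked = {b} := by
        apply Finset.Subset.antisymm
        · intro v hv
          rcases Finset.mem_inter.1 hv with ⟨h1, h2⟩
          have : v ∈ pverts e ℓ ∩ insert x H.marked :=
            Finset.mem_inter.2 ⟨h1, Finset.mem_insert_of_mem h2⟩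
          rw [hmk'] at this
          rcases Finset.mem_insert.1 this with h3 | h3
          · subst h3; rw [← hxa] at h2; exact absurd h2 hxm
          · exact h3
        · simp only [Finset.singleton_subset_iff]
          exact Finset.mem_inter.2 ⟨hbpv, hbM⟩
      exact Or.inr (Or.inl ⟨⟨hxa ▸ hPE, hEIn', hmk2⟩, hxa.symm⟩)
    · -- b = x : reversed e is an x-snake ending at a
      have haM : a ∈ H.marked := by
        have : a ∈ pverts e ℓ ∩ insert x H.marked := by rw [hmk']; simp
        have h2 := (Finset.mem_inter.1 this).2
        rcases Finset.mem_insert.1 h2 with h3 | h3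
        · exact absurd (hxb ▸ h3) hab
        · exact h3
      have hmk2 : pverts e ℓ ∩ H.marked = {a} := by
        apply Finset.Subset.antisymm
        · intro v hv
          rcases Finset.mem_inter.1 hv with ⟨h1, h2⟩
          have hvm : v ∈ pverts e ℓ ∩ insert x H.marked :=
            Finset.mem_inter.2 ⟨h1, Finset.mem_insert_of_mem h2⟩
          rw [hmk'] at hvm
          rcases Finset.mem_insert.1 hvm with h3 | h3
          · simp [h3]
          · rw [Finset.mem_singleton] at h3; subst h3
            rw [← hxb] at h2; exact absurd h2 hxm
        · simp only [Finset.singleton_subset_iff]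
          exact Finset.mem_inter.2 ⟨hapv, haM⟩
      refine Or.inr (Or.inr ⟨⟨hxb ▸ hPE.reverse, fun i hi => hEIn' _ (by omega), ?_⟩, hxb.symm⟩)
      rw [pverts_reverse, hmk2]
  · left
    refine ⟨hPE, hEIn', ?_⟩
    rw [← hmk']
    ext v
    simp only [Finset.mem_inter, Finset.mem_insert]
    constructor
    · rintro ⟨h1, h2⟩; exact ⟨h1, Or.inr h2⟩
    · rintro ⟨h1, h2 | h2⟩
      · exact absurd (h2 ▸ h1) hxpv
      · exact ⟨h1, h2⟩

/-- A one-edge nunchaku from an edge with exactly one unmarked vertex. -/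
lemma nun1_of_edge {H : MarkedHypergraph V} (hunif : H.IsUniform 3) {g : Finset V}
    (hg : g ∈ H.edges) (hcard : (g \ H.marked).card = 1) : ∃ e a b, NunE H e a b 1 := by
  have h3 := hunif g hg
  have hint : (g ∩ H.marked).card = 2 := by
    have := Finset.card_sdiff_add_card_inter g H.marked
    omega
  obtain ⟨a, b, hab, heq⟩ := Finset.card_eq_two.1 hint
  have haab : a ∈ g ∩ H.marked := by rw [heq]; simp
  have hbab : b ∈ g ∩ H.marked := by rw [heq]; simp
  refine ⟨fun _ => g, a, b, ⟨le_refl 1, hab, ?_, ?_, ?_, ?_, ?_, ?_, ?_, ?_⟩, ?_, ?_⟩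
  · intro i _; exact h3
  · intro i j hi hj hij; omega
  · exact (Finset.mem_inter.1 haab).1
  · exact (Finset.mem_inter.1 hbab).1
  · intro i hi; omega
  · intro i j hij hj; omega
  · intro i h1 hi; omega
  · intro i hi; omega
  · intro i _; exact hg
  · rw [show pverts (fun _ => g) 1 = g by simp [pverts], heq]

/-- A one-edge nunchaku certifies a trivial Maker win and conversely
(given no fully marked edge). -/
lemma trivial_iff_nun1 {H : MarkedHypergraph V} (hunif : H.IsUniform 3)
    (hnofull : ¬ ∃ e ∈ H.edges, e ⊆ H.marked) :
    TrivialMakerWin H ↔ ∃ e a b, NunE H e a b 1 := by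
  constructor
  · rintro ⟨g, hg, hc⟩
    have h0 : (g \ H.marked).card ≠ 0 := by
      intro h
      exact hnofull ⟨g, hg, by rwa [← Finset.sdiff_eq_empty_iff_subset, ← Finset.card_eq_zero]⟩
    exact nun1_of_edge hunif hg (by omega)
  · rintro ⟨e, a, b, hPE, hEIn, hmk⟩
    refine ⟨e 0, hEIn 0 (by omega), ?_⟩
    have h3 := hPE.card3 0 (by omega)
    have haM : a ∈ H.marked := by
      have h5 : a ∈ pverts e 1 ∩ H.marked := by rw [hmk]; simp
      exact (Finset.mem_inter.1 h5).2
    have hb0 : b ∈ e 0 := by have := hPE.memb; simpa using this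
    have hbM : b ∈ H.marked := by
      have h5 : b ∈ pverts e 1 ∩ H.marked := by rw [hmk]; simp
      exact (Finset.mem_inter.1 h5).2
    have hsub : ({a, b} : Finset V) ⊆ e 0 ∩ H.marked := by
      intro v hv
      rcases Finset.mem_insert.1 hv with rfl | hv
      · exact Finset.mem_inter.2 ⟨hPE.mema, haM⟩
      · rw [Finset.mem_singleton] at hv; subst hv
        exact Finset.mem_inter.2 ⟨hb0, hbM⟩
    have hc2 : 2 ≤ (e 0 ∩ H.marked).card := by
      have := Finset.card_le_card hsub
      have : ({a, b} : Finset V).card = 2 := by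
        rw [Finset.card_insert_of_notMem (by simp [hPE.ne]), Finset.card_singleton]
      omega
    have := Finset.card_sdiff_add_card_inter (e 0) H.marked
    omega

/-- No fully marked edge survives Breaker's reply, provided no one-edge nunchaku exists. -/
lemma nofull_minus {H : MarkedHypergraph V} (hunif : H.IsUniform 3)
    (hnofull : ¬ ∃ e ∈ H.edges, e ⊆ H.marked) {x y : V} (hxm : x ∉ H.marked)
    (hno1 : ¬ ∃ e a b, NunE H e a b 1) :
    ¬ ∃ g ∈ ((H.plus x).minus y).edges, g ⊆ ((H.plus x).minus y).marked := by
  rintro ⟨g, hg, hsub⟩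
  rcases Finset.mem_filter.1 hg with ⟨hgH, hyg⟩
  have hsub' : g ⊆ insert x H.marked := by
    intro v hv
    have := hsub hv
    exact Finset.mem_of_mem_erase this
  by_cases hxg : x ∈ g
  · have hcard : (g \ H.marked).card = 1 := by
      have h1 : g \ H.marked ⊆ {x} := by
        intro v hv
        rcases Finset.mem_sdiff.1 hv with ⟨h2, h3⟩
        rcases Finset.mem_insert.1 (hsub' h2) with h4 | h4
        · simp [h4]
        · exact absurd h4 h3
      have h2 : x ∈ g \ H.marked := Finset.mem_sdiff.2 ⟨hxg, hxm⟩
      have := Finset.card_le_card h1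
      have h4 : 1 ≤ (g \ H.marked).card := Finset.card_pos.2 ⟨x, h2⟩
      simp only [Finset.card_singleton] at this
      omega
    exact hno1 (nun1_of_edge hunif hgH hcard)
  · refine hnofull ⟨g, hgH, fun v hv => ?_⟩
    rcases Finset.mem_insert.1 (hsub' hv) with h4 | h4
    · exact absurd (h4 ▸ hv) hxg
    · exact h4

/-- The forest property is inherited by `(H.plus x).minus y`. -/
lemma forest_minus {H : MarkedHypergraph V}
    (hforest : ¬ ∃ C c, MB.MarkedHypergraph.IsSub C H ∧ MB.IsCycle C c) (x y : V) :
    ¬ ∃ C c, MB.MarkedHypergraph.IsSub C ((H.plus x).minus y) ∧ MB.IsCycle C c := by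
  rintro ⟨C, c, ⟨hv, he, hmk⟩, hcyc⟩
  refine hforest ⟨⟨C.verts, C.edges, C.verts ∩ H.marked⟩, c, ⟨?_, ?_, rfl⟩, ?_⟩
  · intro v hvv; exact Finset.mem_of_mem_erase (hv hvv)
  · intro g hg; exact (Finset.mem_filter.1 (he hg)).1
  · exact hcyc

/-- Validity is inherited by `(H.plus x).minus y` when at least two vertices are unmarked. -/
lemma valid_minus {H : MarkedHypergraph V} (hval : H.IsValid) {x y : V}
    (hxv : x ∈ H.verts) (hbig : 2 ≤ (H.verts \ H.marked).card) :
    ((H.plus x).minus y).IsValid := by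
  refine ⟨?_, ?_, ?_⟩
  · have h1 : 2 ≤ H.verts.card :=
      le_trans hbig (Finset.card_le_card (Finset.sdiff_subset))
    have : 1 ≤ (H.verts.erase y).card := by
      have := Finset.card_erase_lt_of_mem (a := y) (s := H.verts)
      by_cases hy : y ∈ H.verts
      · have := Finset.card_erase_of_mem hy; omega
      · rw [Finset.erase_eq_of_notMem hy]; omega
    exact Finset.card_pos.1 this
  · intro g hg
    rcases Finset.mem_filter.1 hg with ⟨hgH, hyg⟩
    refine ⟨fun v hv => Finset.mem_erase.2 ⟨fun h => hyg (h ▸ hv), (hval.2.1 g hgH).1 hv⟩,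
      (hval.2.1 g hgH).2⟩
  · intro v hv
    rcases Finset.mem_erase.1 hv with ⟨hvy, hvm⟩
    refine Finset.mem_erase.2 ⟨hvy, ?_⟩
    rcases Finset.mem_insert.1 hvm with h | h
    · exact h ▸ hxv
    · exact hval.2.2 h

/-- Uniformity is inherited. -/
lemma unif_minus {H : MarkedHypergraph V} (hunif : H.IsUniform 3) (x y : V) :
    ((H.plus x).minus y).IsUniform 3 :=
  fun g hg => hunif g (Finset.mem_filter.1 hg).1

/-- Breaker's full reply: all nunchakus after the round have length at least `S`. -/
lemma breaker_step {H : MarkedHypergraph V} (hval : H.IsValid)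
    (hforest : ¬ ∃ C c, MB.MarkedHypergraph.IsSub C H ∧ MB.IsCycle C c)
    {x : V} (hx : x ∈ H.verts) (hxm : x ∉ H.marked) {S : ℕ}
    (hnun : ∀ e a b ℓ, NunE H e a b ℓ → 2 * S - 1 ≤ ℓ ∧ 2 ≤ ℓ)
    (hbig : 2 ≤ (H.verts \ H.marked).card) :
    ∃ y, y ∈ H.verts ∧ y ∉ H.marked ∧ y ≠ x ∧
      ∀ e a b ℓ, NunE ((H.plus x).minus y) e a b ℓ → S ≤ ℓ := by
  obtain ⟨y, hyv, hyM, hyx, hP⟩ := breaker_choice hval hforest hx hxm hnun hbig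
  refine ⟨y, hyv, hyM, hyx, ?_⟩
  intro e a b ℓ hN
  have hyno : y ∉ pverts e ℓ := by
    intro hc
    rcases mem_pverts.1 hc with ⟨i, hi, hv⟩
    exact (Finset.mem_filter.1 (hN.2.1 i hi)).2 hv
  rcases nun_minus hxm hyM hyx hN with h | ⟨hsn, _⟩ | ⟨hsn, _⟩
  · have := hnun _ _ _ _ h
    omega
  · by_contra hc
    exact hyno (hP _ _ _ hsn (by omega))
  · by_contra hc
    have := hP _ _ _ hsn (by omega)
    rw [pverts_reverse] at this
    exact hyno this

/-- The quantitative Breaker bound: if every nunchaku has length at least `L`,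
then `τ_M(H) ≥ 1 + ⌈log₂ L⌉`. -/
lemma lower_bound : ∀ (n : ℕ) (H : MarkedHypergraph V), (H.verts \ H.marked).card ≤ n →
    H.IsValid → H.IsUniform 3 →
    (¬ ∃ C c, MB.MarkedHypergraph.IsSub C H ∧ MB.IsCycle C c) →
    (¬ ∃ e ∈ H.edges, e ⊆ H.marked) →
    ∀ L : ℕ, 1 ≤ L → (∀ e a b ℓ, NunE H e a b ℓ → L ≤ ℓ) →
    ((1 + Nat.clog 2 L : ℕ) : ℕ∞) ≤ H.tauM := by
  intro n
  induction n using Nat.strong_induction_on with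
  | _ n IH =>
  intro H hcard hval hunif hforest hnofull L hL1 hmin
  by_cases htriv : TrivialMakerWin H
  · -- there is a length-1 nunchaku, so L = 1 and tauM ≥ 1
    obtain ⟨e, a, b, hN⟩ := (trivial_iff_nun1 hunif hnofull).1 htriv
    have hLeq : L = 1 := le_antisymm (hmin _ _ _ _ hN) hL1
    rw [tauM, if_pos htriv]
    subst hLeq
    rw [Nat.clog_one_right]
    refine Finset.le_inf ?_
    intro g hg
    have h0 : (g \ H.marked).card ≠ 0 := by
      intro h
      exact hnofull ⟨g, hg, by rwa [← Finset.sdiff_eq_empty_iff_subset, ← Finset.card_eq_zero]⟩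
    have : (1 : ℕ) ≤ (g \ H.marked).card := by omega
    exact_mod_cast this
  · by_cases hsmall : (H.verts \ H.marked).card ≤ 1
    · rw [tauM, if_neg htriv, if_pos hsmall]
      exact le_top
    · rw [tauM, if_neg htriv, if_neg hsmall]
      have hbig : 2 ≤ (H.verts \ H.marked).card := by omega
      have hkey : ∀ x ∈ H.verts \ H.marked,
          ((Nat.clog 2 L : ℕ) : ℕ∞) ≤
            ((H.plus x).verts \ (H.plus x).marked).attach.sup
              (fun y => tauM ((H.plus x).minus y.1)) := by
        intro x hx
        rw [Finset.mem_sdiff] at hx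
        by_cases hL2 : 2 ≤ L
        · set S : ℕ := (L + 1) / 2 with hS
          have hS1 : 1 ≤ S := by omega
          have hSL : S < L := by omega
          have hnun' : ∀ e a b ℓ, NunE H e a b ℓ → 2 * S - 1 ≤ ℓ ∧ 2 ≤ ℓ := by
            intro e a b ℓ hN
            have := hmin _ _ _ _ hN
            omega
          obtain ⟨y, hyv, hyM, hyx, hstep⟩ :=
            breaker_step hval hforest hx.1 hx.2 hnun' hbig
          have hymem : y ∈ (H.plus x).verts \ (H.plus x).marked := by
            simp only [plus, Finset.mem_sdiff, Finset.mem_insert]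
            exact ⟨hyv, by push_neg; exact ⟨hyx, hyM⟩⟩
          set H' := (H.plus x).minus y with hH'
          have hcard' : (H'.verts \ H'.marked).card < (H.verts \ H.marked).card :=
            card_free_lt H x y hymem
          have hno1 : ¬ ∃ e a b, NunE H e a b 1 := by
            rintro ⟨e, a, b, hN⟩
            have := hmin _ _ _ _ hN
            omega
          have hIH := IH ((H'.verts \ H'.marked).card) (by omega) H' le_rfl
            (valid_minus hval hx.1 hbig) (unif_minus hunif x y) (forest_minus hforest x y)
            (nofull_minus hunif hnofull hx.2 hno1) S hS1
            (fun e a b ℓ hN => hstep e a b ℓ hN)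
          have hlog : Nat.clog 2 L = 1 + Nat.clog 2 S := by
            rw [Nat.clog_of_two_le (by omega) hL2, show (L + 2 - 1) / 2 = S by omega]
            omega
          calc ((Nat.clog 2 L : ℕ) : ℕ∞) = ((1 + Nat.clog 2 S : ℕ) : ℕ∞) := by rw [hlog]
            _ ≤ H'.tauM := hIH
            _ ≤ _ := Finset.le_sup (f := fun y => tauM ((H.plus x).minus y.1))
                (Finset.mem_attach _ ⟨y, hymem⟩)
        · have : L = 1 := by omega
          subst this
          simp [Nat.clog_one_right]
      calc ((1 + Nat.clog 2 L : ℕ) : ℕ∞) = 1 + ((Nat.clog 2 L : ℕ) : ℕ∞) := by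
            push_cast; ring
        _ ≤ 1 + (H.verts \ H.marked).inf (fun x =>
              ((H.plus x).verts \ (H.plus x).marked).attach.sup
                (fun y => tauM ((H.plus x).minus y.1))) :=
            add_le_add_right (Finset.le_inf hkey) 1

/-- If `H` has no nunchaku at all, then `τ_M(H) = ⊤`. -/
lemma tauM_top {H : MarkedHypergraph V} (hval : H.IsValid) (hunif : H.IsUniform 3)
    (hforest : ¬ ∃ C c, MB.MarkedHypergraph.IsSub C H ∧ MB.IsCycle C c)
    (hnofull : ¬ ∃ e ∈ H.edges, e ⊆ H.marked)
    (hnonun : ¬ ∃ e a b ℓ, NunE H e a b ℓ) : H.tauM = ⊤ := by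
  by_contra hne
  obtain ⟨k, hk⟩ := WithTop.ne_top_iff_exists.1 hne
  have hbound := lower_bound ((H.verts \ H.marked).card) H le_rfl hval hunif hforest hnofull
    (2 ^ k) (Nat.one_le_two_pow)
    (fun e a b ℓ hN => absurd ⟨e, a, b, ℓ, hN⟩ hnonun)
  have hk' : ((k : ℕ) : ℕ∞) = H.tauM := by exact_mod_cast hk
  rw [← hk', Nat.clog_pow 2 k (by omega)] at hbound
  have : (1 + k : ℕ) ≤ k := Nat.cast_le.1 hbound
  omega

/-- A Maker win has finite `τ_M`. -/
lemma makerwin_ne_top : ∀ (n : ℕ) (H : MarkedHypergraph V),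
    (H.verts \ H.marked).card ≤ n → H.MakerWin → H.tauM ≠ ⊤ := by
  intro n
  induction n using Nat.strong_induction_on with
  | _ n IH =>
  intro H hcard hw
  rw [MakerWin] at hw
  by_cases htriv : TrivialMakerWin H
  · rw [tauM, if_pos htriv]
    obtain ⟨e, he, hc⟩ := htriv
    have h1 : H.edges.inf (fun e => ((e \ H.marked).card : ℕ∞)) ≤ ((e \ H.marked).card : ℕ∞) :=
      Finset.inf_le he
    exact ne_top_of_le_ne_top (WithTop.coe_ne_top) h1
  · by_cases hsmall : (H.verts \ H.marked).card ≤ 1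
    · rw [if_pos hsmall] at hw
      exact absurd hw htriv
    · rw [if_neg hsmall] at hw
      rw [tauM, if_neg htriv, if_neg hsmall]
      obtain ⟨x, hx, hall⟩ := hw
      rw [show ∀ a b : ℕ∞, a + b ≠ ⊤ ↔ a ≠ ⊤ ∧ b ≠ ⊤ from fun a b => WithTop.add_ne_top]
      refine ⟨by simp, ?_⟩
      have hsup : ((H.plus x).verts \ (H.plus x).marked).attach.sup
          (fun y => tauM ((H.plus x).minus y.1)) < ⊤ := by
        rw [Finset.sup_lt_iff (by simp)]
        rintro ⟨y, hy⟩ _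
        have hlt := card_free_lt H x y hy
        have := IH ((((H.plus x).minus y).verts \ ((H.plus x).minus y).marked).card)
          (by omega) ((H.plus x).minus y) le_rfl (hall y hy)
        exact lt_top_iff_ne_top.2 this
      have hinf := Finset.inf_le (f := fun x =>
        ((H.plus x).verts \ (H.plus x).marked).attach.sup
          (fun y => tauM ((H.plus x).minus y.1))) hx
      exact lt_top_iff_ne_top.1 (lt_of_le_of_lt hinf hsup)

/-- A one-edge nunchaku gives a trivial Maker win. -/
lemma nun1_trivial {H : MarkedHypergraph V} (h : ∃ e a b, NunE H e a b 1) :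
    TrivialMakerWin H := by
  obtain ⟨e, a, b, hPE, hEIn, hmk⟩ := h
  refine ⟨e 0, hEIn 0 (by omega), ?_⟩
  have h3 := hPE.card3 0 (by omega)
  have haM : a ∈ H.marked := by
    have h5 : a ∈ pverts e 1 ∩ H.marked := by rw [hmk]; simp
    exact (Finset.mem_inter.1 h5).2
  have hb0 : b ∈ e 0 := by have := hPE.memb; simpa using this
  have hbM : b ∈ H.marked := by
    have h5 : b ∈ pverts e 1 ∩ H.marked := by rw [hmk]; simp
    exact (Finset.mem_inter.1 h5).2
  have hsub : ({a, b} : Finset V) ⊆ e 0 ∩ H.marked := by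
    intro v hv
    rcases Finset.mem_insert.1 hv with rfl | hv
    · exact Finset.mem_inter.2 ⟨hPE.mema, haM⟩
    · rw [Finset.mem_singleton] at hv; subst hv
      exact Finset.mem_inter.2 ⟨hb0, hbM⟩
  have hc2 : 2 ≤ (e 0 ∩ H.marked).card := by
    have h4 := Finset.card_le_card hsub
    have h5 : ({a, b} : Finset V).card = 2 := by
      rw [Finset.card_insert_of_notMem (by simp [hPE.ne]), Finset.card_singleton]
    omega
  have := Finset.card_sdiff_add_card_inter (e 0) H.marked
  omega

/-- A trivial Maker win is a Maker win, in at most one move. -/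
lemma trivial_makerwin : ∀ (n : ℕ) (H : MarkedHypergraph V),
    (H.verts \ H.marked).card ≤ n → H.IsValid → TrivialMakerWin H →
    H.MakerWin ∧ H.tauM ≤ 1 := by
  intro n
  induction n using Nat.strong_induction_on with
  | _ n IH =>
  intro H hcard hval htriv
  have htau : H.tauM ≤ 1 := by
    rw [tauM, if_pos htriv]
    obtain ⟨e, he, hc⟩ := htriv
    calc H.edges.inf (fun e => ((e \ H.marked).card : ℕ∞)) ≤ ((e \ H.marked).card : ℕ∞) :=
        Finset.inf_le he
      _ ≤ 1 := by exact_mod_cast hc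
  refine ⟨?_, htau⟩
  rw [MakerWin]
  split_ifs with hsmall
  · exact htriv
  · have hbig : 2 ≤ (H.verts \ H.marked).card := by omega
    obtain ⟨e, he, hc⟩ := htriv
    have hnext : ∀ x, x ∈ H.verts → x ∉ H.marked → e ⊆ insert x H.marked →
        ∀ y ∈ (H.plus x).verts \ (H.plus x).marked, ((H.plus x).minus y).MakerWin := by
      intro x hxv hxM hesub y hy
      rw [Finset.mem_sdiff] at hy
      have hy2 : y ∉ insert x H.marked := hy.2
      have hyx : y ≠ x := fun h => hy2 (by rw [h]; exact Finset.mem_insert_self x _)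
      have hyM : y ∉ H.marked := fun h => hy2 (Finset.mem_insert_of_mem h)
      have hye : y ∉ e := fun h => hy2 (hesub h)
      have htriv' : TrivialMakerWin ((H.plus x).minus y) := by
        refine ⟨e, Finset.mem_filter.2 ⟨he, hye⟩, ?_⟩
        have : e \ ((H.plus x).minus y).marked = ∅ := by
          rw [Finset.eq_empty_iff_forall_notMem]
          intro v hv
          rcases Finset.mem_sdiff.1 hv with ⟨h1, h2⟩
          exact h2 (Finset.mem_erase.2 ⟨fun hh => hye (hh ▸ h1), hesub h1⟩)
        rw [this]
        simp
      have hlt := card_free_lt H x y (Finset.mem_sdiff.2 hy)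
      exact (IH ((((H.plus x).minus y).verts \ ((H.plus x).minus y).marked).card)
        (by omega) _ le_rfl (valid_minus hval hxv hbig) htriv').1
    by_cases hc1 : (e \ H.marked).card = 1
    · obtain ⟨c, hceq⟩ := Finset.card_eq_one.1 hc1
      have hcmem : c ∈ e \ H.marked := by rw [hceq]; simp
      rw [Finset.mem_sdiff] at hcmem
      have hcv : c ∈ H.verts := (hval.2.1 e he).1 hcmem.1
      refine ⟨c, Finset.mem_sdiff.2 ⟨hcv, hcmem.2⟩, ?_⟩
      refine hnext c hcv hcmem.2 ?_
      intro v hv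
      by_cases hvM : v ∈ H.marked
      · exact Finset.mem_insert_of_mem hvM
      · have : v ∈ e \ H.marked := Finset.mem_sdiff.2 ⟨hv, hvM⟩
        rw [hceq] at this
        rw [Finset.mem_singleton] at this
        simp [this]
    · have he0 : e ⊆ H.marked := by
        rw [← Finset.sdiff_eq_empty_iff_subset, ← Finset.card_eq_zero]
        omega
      have : (H.verts \ H.marked).Nonempty := Finset.card_pos.1 (by omega)
      obtain ⟨x, hx⟩ := this
      rw [Finset.mem_sdiff] at hx
      refine ⟨x, Finset.mem_sdiff.2 hx, ?_⟩
      exact hnext x hx.1 hx.2 (fun v hv => Finset.mem_insert_of_mem (he0 hv))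

/-- The Maker bound: a nunchaku of length `L` gives a Maker win
with `τ_M(H) ≤ 1 + ⌈log₂ L⌉`. -/
lemma upper_bound : ∀ (L : ℕ) (H : MarkedHypergraph V), H.IsValid →
    (∃ e a b, NunE H e a b L) →
    H.MakerWin ∧ H.tauM ≤ ((1 + Nat.clog 2 L : ℕ) : ℕ∞) := by
  intro L
  induction L using Nat.strong_induction_on with
  | _ L IH =>
  intro H hval hex
  obtain ⟨e, a, b, hN⟩ := hex
  obtain ⟨hPE, hEIn, hmk⟩ := hN
  have hL1 := hPE.pos
  have haM : a ∈ H.marked := by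
    have h5 : a ∈ pverts e L ∩ H.marked := by rw [hmk]; simp
    exact (Finset.mem_inter.1 h5).2
  have hbM : b ∈ H.marked := by
    have h5 : b ∈ pverts e L ∩ H.marked := by rw [hmk]; simp
    exact (Finset.mem_inter.1 h5).2
  by_cases hL2 : 2 ≤ L
  · -- split the nunchaku at the connector after edge S-1
    set S : ℕ := (L + 1) / 2 with hS
    have hS1 : 1 ≤ S := by omega
    have hSL : S < L := by omega
    obtain ⟨x, hx⟩ := Finset.card_eq_one.1 (hPE.adj (S-1) (by omega))
    rw [show S - 1 + 1 = S by omega] at hx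
    have hxmem : x ∈ e (S-1) ∧ x ∈ e S := by
      have : x ∈ e (S-1) ∩ e S := by rw [hx]; simp
      exact Finset.mem_inter.1 this
    have hxa : x ≠ a := by
      intro h
      have := hPE.mem_only_a (by omega : S < L) (h ▸ hxmem.2)
      omega
    have hxb : x ≠ b := by
      intro h
      have := hPE.mem_only_b (by omega : S - 1 < L) (h ▸ hxmem.1)
      omega
    have hxM : x ∉ H.marked := by
      intro hc
      have : x ∈ pverts e L ∩ H.marked :=
        Finset.mem_inter.2 ⟨mem_pverts_of_mem (by omega) hxmem.2, hc⟩
      rw [hmk] at this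
      rcases Finset.mem_insert.1 this with h | h
      · exact hxa h
      · exact hxb (Finset.mem_singleton.1 h)
    have hxv : x ∈ H.verts := (hval.2.1 _ (hEIn S (by omega))).1 hxmem.2
    -- two distinct unmarked vertices: the first connector and the third vertex of e 0
    obtain ⟨c0, hc0⟩ := Finset.card_eq_one.1 (hPE.adj 0 (by omega))
    have hc0mem : c0 ∈ e 0 ∧ c0 ∈ e 1 := by
      have : c0 ∈ e 0 ∩ e 1 := by rw [hc0]; simp
      exact Finset.mem_inter.1 this
    have hc0a : c0 ≠ a := by
      intro h
      have := hPE.mem_only_a (by omega : 1 < L) (h ▸ hc0mem.2)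
      omega
    have hc0b : c0 ≠ b := by
      intro h
      have := hPE.mem_only_b (by omega : (0:ℕ) < L) (h ▸ hc0mem.1)
      omega
    have hc0M : c0 ∉ H.marked := by
      intro hc
      have : c0 ∈ pverts e L ∩ H.marked :=
        Finset.mem_inter.2 ⟨mem_pverts_of_mem (by omega) hc0mem.1, hc⟩
      rw [hmk] at this
      rcases Finset.mem_insert.1 this with h | h
      · exact hc0a h
      · exact hc0b (Finset.mem_singleton.1 h)
    obtain ⟨w, hwmem, hwa, hwc0, hgeq⟩ :=
      third_vertex (hPE.card3 0 (by omega)) hPE.mema hc0mem.1 (Ne.symm hc0a)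
    have hwb : w ≠ b := by
      intro h
      have := hPE.mem_only_b (by omega : (0:ℕ) < L) (h ▸ hwmem)
      omega
    have hwM : w ∉ H.marked := by
      intro hc
      have : w ∈ pverts e L ∩ H.marked :=
        Finset.mem_inter.2 ⟨mem_pverts_of_mem (by omega) hwmem, hc⟩
      rw [hmk] at this
      rcases Finset.mem_insert.1 this with h | h
      · exact hwa h
      · exact hwb (Finset.mem_singleton.1 h)
    have hbig : 2 ≤ (H.verts \ H.marked).card := by
      have hc0in : c0 ∈ H.verts \ H.marked :=
        Finset.mem_sdiff.2 ⟨(hval.2.1 _ (hEIn 1 (by omega))).1 hc0mem.2, hc0M⟩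
      have hwin : w ∈ H.verts \ H.marked :=
        Finset.mem_sdiff.2 ⟨(hval.2.1 _ (hEIn 0 (by omega))).1 hwmem, hwM⟩
      exact Finset.one_lt_card.2 ⟨c0, hc0in, w, hwin, Ne.symm hwc0⟩
    -- Maker's strategy: mark x; whatever Breaker removes, one side survives
    have hstep : ∀ y ∈ (H.plus x).verts \ (H.plus x).marked,
        ∃ ℓ, 1 ≤ ℓ ∧ ℓ ≤ S ∧ ℓ < L ∧
          (∃ e' a' b', NunE ((H.plus x).minus y) e' a' b' ℓ) := by
      intro y hy
      rw [Finset.mem_sdiff] at hy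
      have hy2 : y ∉ insert x H.marked := hy.2
      have hyx : y ≠ x := fun h => hy2 (by rw [h]; exact Finset.mem_insert_self x _)
      have hyM : y ∉ H.marked := fun h => hy2 (Finset.mem_insert_of_mem h)
      by_cases hyL : y ∈ pverts e S
      · -- right side survives: x → b of length L - S
        refine ⟨L - S, by omega, by omega, by omega, fun i => e (S + i), x, b, ?_, ?_, ?_⟩
        · refine hPE.suffix (by omega) hxmem.2 ?_ hxb
          intro j hj hjL hcj
          have := hPE.occ_close hxmem.1 hcj (by omega) hjL
          omega
        · intro i hi
          refine Finset.mem_filter.2 ⟨hEIn _ (by omega), ?_⟩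
          intro hc
          rcases mem_pverts.1 hyL with ⟨j, hjS, hyj⟩
          have := hPE.occ_close hyj hc (by omega) (by omega)
          have hj' : j = S - 1 ∧ i = 0 := by omega
          have : y ∈ e (S-1) ∩ e S := by
            refine Finset.mem_inter.2 ⟨hj'.1 ▸ hyj, ?_⟩
            have := hj'.2 ▸ hc
            simpa [hj'.2] using this
          rw [hx] at this
          exact hyx (by simpa using this)
        · apply Finset.Subset.antisymm
          · intro v hv
            rcases Finset.mem_inter.1 hv with ⟨h1, h2⟩
            rcases Finset.mem_erase.1 h2 with ⟨hvy, hvm⟩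
            rcases Finset.mem_insert.1 hvm with h3 | h3
            · simp [h3]
            · have : v ∈ pverts e L ∩ H.marked := by
                refine Finset.mem_inter.2 ⟨?_, h3⟩
                rcases mem_pverts.1 h1 with ⟨i, hi, hvi⟩
                exact mem_pverts_of_mem (by omega : S + i < L) hvi
              rw [hmk] at this
              rcases Finset.mem_insert.1 this with h4 | h4
              · subst h4
                rcases mem_pverts.1 h1 with ⟨i, hi, hvi⟩
                have := hPE.mem_only_a (by omega : S + i < L) hvi
                omega
              · rw [Finset.mem_singleton] at h4
                simp [h4]
          · intro v hv
            rcases Finset.mem_insert.1 hv with rfl | hv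
            · refine Finset.mem_inter.2 ⟨?_, ?_⟩
              · refine mem_pverts_of_mem (i := 0) (by omega) ?_
                simpa using hxmem.2
              · exact Finset.mem_erase.2 ⟨Ne.symm hyx, Finset.mem_insert_self _ _⟩
            · rw [Finset.mem_singleton] at hv; subst hv
              refine Finset.mem_inter.2 ⟨?_, ?_⟩
              · refine mem_pverts_of_mem (i := L - S - 1) (by omega) ?_
                have : S + (L - S - 1) = L - 1 := by omega
                rw [this]; exact hPE.memb
              · exact Finset.mem_erase.2 ⟨fun h => hyM (h ▸ hbM),
                  Finset.mem_insert_of_mem hbM⟩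
      · -- left side survives: a → x of length S
        refine ⟨S, by omega, le_refl _, by omega, e, a, x, ?_, ?_, ?_⟩
        · have := hPE.prefix (k := S - 1) (by omega) hxmem.1 ?_ hxa
          · rwa [show S - 1 + 1 = S by omega] at this
          · intro j hj hcj
            have := hPE.occ_close hcj hxmem.2 (by omega) (by omega)
            omega
        · intro i hi
          refine Finset.mem_filter.2 ⟨hEIn _ (by omega), ?_⟩
          intro hc
          exact hyL (mem_pverts_of_mem (by omega) hc)
        · apply Finset.Subset.antisymm
          · intro v hv
            rcases Finset.mem_inter.1 hv with ⟨h1, h2⟩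
            rcases Finset.mem_erase.1 h2 with ⟨hvy, hvm⟩
            rcases Finset.mem_insert.1 hvm with h3 | h3
            · simp [h3]
            · have : v ∈ pverts e L ∩ H.marked := by
                refine Finset.mem_inter.2 ⟨?_, h3⟩
                rcases mem_pverts.1 h1 with ⟨i, hi, hvi⟩
                exact mem_pverts_of_mem (by omega : i < L) hvi
              rw [hmk] at this
              rcases Finset.mem_insert.1 this with h4 | h4
              · simp [h4]
              · rw [Finset.mem_singleton] at h4
                subst h4
                rcases mem_pverts.1 h1 with ⟨i, hi, hvi⟩
                have := hPE.mem_only_b (by omega : i < L) hvi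
                omega
          · intro v hv
            rcases Finset.mem_insert.1 hv with rfl | hv
            · refine Finset.mem_inter.2 ⟨mem_pverts_of_mem (by omega : (0:ℕ) < S) hPE.mema, ?_⟩
              exact Finset.mem_erase.2 ⟨fun h => hyM (h ▸ haM), Finset.mem_insert_of_mem haM⟩
            · rw [Finset.mem_singleton] at hv; subst hv
              refine Finset.mem_inter.2 ⟨mem_pverts_of_mem (by omega : S - 1 < S) hxmem.1, ?_⟩
              exact Finset.mem_erase.2 ⟨Ne.symm hyx, Finset.mem_insert_self _ _⟩
    constructor
    · rw [MakerWin, if_neg (by omega)]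
      refine ⟨x, Finset.mem_sdiff.2 ⟨hxv, hxM⟩, ?_⟩
      intro y hy
      obtain ⟨ℓ, h1, h2, h3, hN'⟩ := hstep y hy
      exact (IH ℓ h3 _ (valid_minus hval hxv hbig) hN').1
    · rw [tauM]
      by_cases htriv : TrivialMakerWin H
      · rw [if_pos htriv]
        obtain ⟨g, hg, hgc⟩ := htriv
        calc H.edges.inf (fun g => ((g \ H.marked).card : ℕ∞)) ≤ ((g \ H.marked).card : ℕ∞) :=
            Finset.inf_le hg
          _ ≤ ((1 + Nat.clog 2 L : ℕ) : ℕ∞) := by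
            exact_mod_cast Nat.le_trans hgc (by omega)
      · rw [if_neg htriv, if_neg (by omega : ¬ (H.verts \ H.marked).card ≤ 1)]
        have hsup : ((H.plus x).verts \ (H.plus x).marked).attach.sup
            (fun y => tauM ((H.plus x).minus y.1)) ≤ ((Nat.clog 2 L : ℕ) : ℕ∞) := by
          refine Finset.sup_le ?_
          rintro ⟨y, hy⟩ _
          obtain ⟨ℓ, h1, h2, h3, hN'⟩ := hstep y hy
          have hIH := (IH ℓ h3 _ (valid_minus hval hxv hbig) hN').2
          refine le_trans hIH ?_
          have hlog : 1 + Nat.clog 2 ℓ ≤ Nat.clog 2 L := by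
            rw [Nat.clog_of_two_le (by omega) hL2, show (L + 2 - 1) / 2 = S by omega]
            have := Nat.clog_mono_right 2 h2
            omega
          exact_mod_cast hlog
        calc 1 + (H.verts \ H.marked).inf (fun x =>
              ((H.plus x).verts \ (H.plus x).marked).attach.sup
                (fun y => tauM ((H.plus x).minus y.1)))
            ≤ 1 + ((Nat.clog 2 L : ℕ) : ℕ∞) :=
              add_le_add_right (le_trans (Finset.inf_le (Finset.mem_sdiff.2 ⟨hxv, hxM⟩)) hsup) 1
          _ = ((1 + Nat.clog 2 L : ℕ) : ℕ∞) := by push_cast; ring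
  · -- L = 1
    have hLe : L = 1 := by omega
    subst hLe
    have htriv : TrivialMakerWin H := nun1_trivial ⟨e, a, b, hPE, hEIn, hmk⟩
    obtain ⟨hw, ht⟩ := trivial_makerwin ((H.verts \ H.marked).card) H le_rfl hval htriv
    refine ⟨hw, le_trans ht ?_⟩
    rw [Nat.clog_one_right]
    exact_mod_cast Nat.le_refl 1

/-- Bridge between indexed nunchakus and `nunchakuLengths`. -/
lemma nunE_iff_mem_lengths {H : MarkedHypergraph V} (hval : H.IsValid) (L : ℕ) :
    (∃ e a b, NunE H e a b L) ↔ L ∈ MB.nunchakuLengths H := by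
  constructor
  · rintro ⟨e, a, b, hPE, hEIn, hmk⟩
    refine ⟨hPE.pos, ⟨pverts e L, pedges e L, pverts e L ∩ H.marked⟩, a, b, ?_, ?_, hmk⟩
    · refine ⟨pverts_subset hval hEIn, ?_, rfl⟩
      intro g hg
      rcases mem_pedges.1 hg with ⟨i, hi, rfl⟩
      exact hEIn i hi
    · exact hPE.isPathLen rfl rfl
  · rintro ⟨hL1, N, a, b, hsub, hpath, hmk⟩
    obtain ⟨e, hPE, hv, he⟩ := pe_of_isPathLen hpath hL1
    refine ⟨e, a, b, hPE, ?_, ?_⟩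
    · intro i hi
      exact hsub.2.1 (he ▸ mem_pedges.2 ⟨i, hi, rfl⟩)
    · rw [← hv, ← hsub.2.2, hmk]

lemma nunE_iff_sub {H : MarkedHypergraph V} (hval : H.IsValid) :
    (∃ L e a b, NunE H e a b L) ↔ ∃ N, MB.MarkedHypergraph.IsSub N H ∧ MB.IsNunchaku N := by
  constructor
  · rintro ⟨L, e, a, b, hN⟩
    obtain ⟨hL1, N, a', b', hsub, hpath, hmk⟩ := (nunE_iff_mem_lengths hval L).1 ⟨e, a, b, hN⟩
    exact ⟨N, hsub, a', b', L, hL1, hpath, hmk⟩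
  · rintro ⟨N, hsub, a, b, L, hL1, hpath, hmk⟩
    exact ⟨L, (nunE_iff_mem_lengths hval L).2 ⟨hL1, N, a, b, hsub, hpath, hmk⟩⟩
end MB
/-- Theorem 2.2 (hyperforests): Maker wins iff there is a nunchaku, in which case
`τ_M(H) = 1 + ⌈log₂ L(H)⌉`. -/
theorem statement6 {V : Type} [DecidableEq V] (H : MB.MarkedHypergraph V)
    (hval : H.IsValid) (hunif : H.IsUniform 3)
    (hforest : ¬ ∃ C a, MB.MarkedHypergraph.IsSub C H ∧ MB.IsCycle C a)
    (hnofull : ¬ ∃ e ∈ H.edges, e ⊆ H.marked) :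
    (H.MakerWin ↔ ∃ N, N.IsSub H ∧ MB.IsNunchaku N) ∧
    (H.MakerWin → ∃ L ∈ MB.nunchakuLengths H,
      (∀ L' ∈ MB.nunchakuLengths H, L ≤ L') ∧
      MB.MarkedHypergraph.tauM H = ((1 + Nat.clog 2 L : ℕ) : ℕ∞)) := by
  classical
  have hmw_nun : H.MakerWin → ∃ L, L ∈ MB.nunchakuLengths H := by
    intro hw
    by_contra hno
    have hnonun : ¬ ∃ e a b ℓ, MB.NunE H e a b ℓ := by
      rintro ⟨e, a, b, ℓ, hN⟩
      exact hno ⟨ℓ, (MB.nunE_iff_mem_lengths hval ℓ).1 ⟨e, a, b, hN⟩⟩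
    exact MB.makerwin_ne_top _ H le_rfl hw
      (MB.tauM_top hval hunif hforest hnofull hnonun)
  constructor
  · constructor
    · intro hw
      obtain ⟨L, hL⟩ := hmw_nun hw
      exact (MB.nunE_iff_sub hval).1 ⟨L, ((MB.nunE_iff_mem_lengths hval L).2 hL)⟩
    · rintro ⟨N, hsub, hnun⟩
      obtain ⟨L, hL⟩ := (MB.nunE_iff_sub hval).2 ⟨N, hsub, hnun⟩
      exact (MB.upper_bound L H hval hL).1
  · intro hw
    have hne := hmw_nun hw
    refine ⟨Nat.find hne, Nat.find_spec hne, fun L' hL' => Nat.find_min' hne hL', ?_⟩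
    refine le_antisymm ?_ ?_
    · exact (MB.upper_bound (Nat.find hne) H hval
        ((MB.nunE_iff_mem_lengths hval _).2 (Nat.find_spec hne))).2
    · exact MB.lower_bound _ H le_rfl hval hunif hforest hnofull (Nat.find hne)
        (Nat.find_spec hne).1
        (fun e a b ℓ hN => Nat.find_min' hne ((MB.nunE_iff_mem_lengths hval ℓ).1 ⟨e, a, b, hN⟩))
end

section
/- Let H be a marked hypergraph with |V(H)∖M(H)| ≥ 2, and for each x ∈ V(H)∖M(H) let 𝒳_x be the collection of all dangers at x in H. Then H is a Breaker win if and only if I_{H^{+x}}(𝒳_x) ≠ ∅ for every x ∈ V(H)∖M(H). -/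
namespace MB

open MarkedHypergraph

variable {V : Type} [DecidableEq V]

section Aux
open MarkedHypergraph

variable {V : Type} [DecidableEq V]

/-- Structural sanity: edges and marked vertices lie inside the vertex set. -/
def Ok (H : MarkedHypergraph V) : Prop :=
  (∀ e ∈ H.edges, e ⊆ H.verts) ∧ H.marked ⊆ H.verts

lemma ok_pm {H : MarkedHypergraph V} (hOk : Ok H) {x : V} (hx : x ∈ H.verts) (y : V) :
    Ok ((H.plus x).minus y) := by
  constructor
  · intro e he
    simp only [plus, minus, Finset.mem_filter] at he
    intro v hv
    exact Finset.mem_erase.mpr ⟨fun h => he.2 (h ▸ hv), hOk.1 e he.1 hv⟩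
  · intro v hv
    simp only [plus, minus, Finset.mem_erase, Finset.mem_insert] at hv ⊢
    refine ⟨hv.1, ?_⟩
    rcases hv.2 with h | h
    · exact h ▸ hx
    · exact hOk.2 h

lemma mem_free_plus {H : MarkedHypergraph V} {x v : V} :
    v ∈ (H.plus x).verts \ (H.plus x).marked ↔ v ∈ H.verts ∧ v ≠ x ∧ v ∉ H.marked := by
  simp only [plus, Finset.mem_sdiff, Finset.mem_insert, not_or]

lemma mem_free_pm {H : MarkedHypergraph V} {x y v : V} :
    v ∈ ((H.plus x).minus y).verts \ ((H.plus x).minus y).marked ↔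
      v ∈ H.verts ∧ v ≠ y ∧ v ≠ x ∧ v ∉ H.marked := by
  simp only [plus, minus, Finset.mem_sdiff, Finset.mem_erase, Finset.mem_insert, not_and, not_or]
  constructor
  · rintro ⟨⟨hvy, hv⟩, h2⟩
    obtain ⟨h3, h4⟩ := h2 hvy
    exact ⟨hv, hvy, h3, h4⟩
  · rintro ⟨hv, hvy, hvx, hvm⟩
    exact ⟨⟨hvy, hv⟩, fun _ => ⟨hvx, hvm⟩⟩

lemma mem_edges_pm {H : MarkedHypergraph V} {x y : V} {e : Finset V} :
    e ∈ ((H.plus x).minus y).edges ↔ e ∈ H.edges ∧ y ∉ e := by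
  simp [plus, minus]

lemma mem_marked_pm {H : MarkedHypergraph V} {x y v : V} :
    v ∈ ((H.plus x).minus y).marked ↔ v ≠ y ∧ (v = x ∨ v ∈ H.marked) := by
  simp [plus, minus]

lemma trivial_mono {G G' : MarkedHypergraph V} (he : G.edges ⊆ G'.edges)
    (hm : G.marked ⊆ G'.marked) : TrivialMakerWin G → TrivialMakerWin G' := by
  rintro ⟨e, hed, hc⟩
  refine ⟨e, he hed, le_trans (Finset.card_le_card ?_) hc⟩
  intro v hv
  rw [Finset.mem_sdiff] at hv ⊢
  exact ⟨hv.1, fun h => hv.2 (hm h)⟩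

lemma trivialWin : ∀ n (H : MarkedHypergraph V), (H.verts \ H.marked).card ≤ n →
    Ok H → TrivialMakerWin H → H.MakerWin := by
  intro n
  induction n with
  | zero =>
    intro H hc hOk ht
    rw [MakerWin, if_pos (by omega)]
    exact ht
  | succ m ih =>
    intro H hc hOk ht
    rw [MakerWin]
    split_ifs with h1
    · exact ht
    push_neg at h1
    obtain ⟨e, he, hce⟩ := ht
    have hxfree : ∃ x ∈ H.verts \ H.marked, e \ H.marked ⊆ {x} := by
      by_cases hne : (e \ H.marked).Nonempty
      · obtain ⟨x, hx⟩ := hne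
        refine ⟨x, ?_, ?_⟩
        · have hx' := Finset.mem_sdiff.mp hx
          exact Finset.mem_sdiff.mpr ⟨hOk.1 e he hx'.1, hx'.2⟩
        · intro v hv
          rw [Finset.mem_singleton]
          by_contra hvx
          have : 2 ≤ (e \ H.marked).card := Finset.one_lt_card.mpr ⟨v, hv, x, hx, hvx⟩
          omega
      · obtain ⟨x, hx⟩ := Finset.card_pos.mp (by omega : 0 < (H.verts \ H.marked).card)
        refine ⟨x, hx, ?_⟩
        rw [Finset.not_nonempty_iff_eq_empty] at hne
        simp [hne]
    obtain ⟨x, hx, hsub⟩ := hxfree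
    refine ⟨x, hx, fun y hy => ?_⟩
    have hc' := card_free_lt H x y hy
    obtain ⟨hyv, hyy, hyx, hym⟩ : y ∈ H.verts ∧ True ∧ y ≠ x ∧ y ∉ H.marked := by
      obtain ⟨h1, h2, h3⟩ := mem_free_plus.mp hy
      exact ⟨h1, trivial, h2, h3⟩
    have hye : y ∉ e := by
      intro hyin
      exact hyx (Finset.mem_singleton.mp (hsub (Finset.mem_sdiff.mpr ⟨hyin, hym⟩)))
    apply ih _ (by omega) (ok_pm hOk (Finset.mem_sdiff.mp hx).1 y)
    refine ⟨e, mem_edges_pm.mpr ⟨he, hye⟩, ?_⟩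
    have hempty : e \ ((H.plus x).minus y).marked = ∅ := by
      apply Finset.eq_empty_of_forall_notMem
      intro v hv
      rw [Finset.mem_sdiff] at hv
      apply hv.2
      rw [mem_marked_pm]
      refine ⟨fun h => hye (h ▸ hv.1), ?_⟩
      by_cases hvm : v ∈ H.marked
      · exact Or.inr hvm
      · exact Or.inl (Finset.mem_singleton.mp (hsub (Finset.mem_sdiff.mpr ⟨hv.1, hvm⟩)))
    rw [hempty]
    simp

lemma mono : ∀ n (G G' : MarkedHypergraph V), (G'.verts \ G'.marked).card ≤ n →
    Ok G → Ok G' → G.edges ⊆ G'.edges → G.marked ⊆ G'.marked →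
    G.verts \ G.marked ⊆ G'.verts \ G'.marked → G.MakerWin → G'.MakerWin := by
  intro n
  induction n with
  | zero =>
    intro G G' hc hOk hOk' hE hM hF hG
    have hc0 : (G.verts \ G.marked).card ≤ 1 := by
      have := Finset.card_le_card hF; omega
    rw [MakerWin, if_pos hc0] at hG
    exact trivialWin 0 G' (by omega) hOk' (trivial_mono hE hM hG)
  | succ m ih =>
    intro G G' hc hOk hOk' hE hM hF hG
    by_cases h1 : (G.verts \ G.marked).card ≤ 1
    · rw [MakerWin, if_pos h1] at hG
      exact trivialWin _ G' hc hOk' (trivial_mono hE hM hG)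
    rw [MakerWin, if_neg h1] at hG
    obtain ⟨x, hx, hrec⟩ := hG
    have hx' : x ∈ G'.verts \ G'.marked := hF hx
    have h2' : ¬ (G'.verts \ G'.marked).card ≤ 1 := by
      have := Finset.card_le_card hF; omega
    rw [MakerWin, if_neg h2']
    refine ⟨x, hx', fun y hy => ?_⟩
    have hcy := card_free_lt G' x y hy
    obtain ⟨hyv', hyx, hym'⟩ := mem_free_plus.mp hy
    obtain ⟨hxv, hxm⟩ := Finset.mem_sdiff.mp hx
    obtain ⟨hxv', hxm'⟩ := Finset.mem_sdiff.mp hx'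
    by_cases hyG : y ∈ G.verts
    · have hym : y ∉ G.marked := fun h => hym' (hM h)
      have hwin := hrec y (mem_free_plus.mpr ⟨hyG, hyx, hym⟩)
      apply ih _ _ (by omega) (ok_pm hOk hxv y) (ok_pm hOk' hxv' y) ?_ ?_ ?_ hwin
      · intro e he
        obtain ⟨he1, he2⟩ := mem_edges_pm.mp he
        exact mem_edges_pm.mpr ⟨hE he1, he2⟩
      · intro v hv
        obtain ⟨hv1, hv2⟩ := mem_marked_pm.mp hv
        exact mem_marked_pm.mpr ⟨hv1, hv2.imp id fun h => hM h⟩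
      · intro v hv
        obtain ⟨hv1, hv2, hv3, hv4⟩ := mem_free_pm.mp hv
        have : v ∈ G'.verts \ G'.marked := hF (Finset.mem_sdiff.mpr ⟨hv1, hv4⟩)
        rw [Finset.mem_sdiff] at this
        exact mem_free_pm.mpr ⟨this.1, hv2, hv3, this.2⟩
    · obtain ⟨y₀, hy₀, hy₀x⟩ :=
        Finset.exists_mem_ne (by omega : 1 < (G.verts \ G.marked).card) x
      obtain ⟨hy₀v, hy₀m⟩ := Finset.mem_sdiff.mp hy₀
      have hwin := hrec y₀ (mem_free_plus.mpr ⟨hy₀v, hy₀x, hy₀m⟩)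
      apply ih _ _ (by omega) (ok_pm hOk hxv y₀) (ok_pm hOk' hxv' y) ?_ ?_ ?_ hwin
      · intro e he
        obtain ⟨he1, _⟩ := mem_edges_pm.mp he
        exact mem_edges_pm.mpr ⟨hE he1, fun hyine => hyG (hOk.1 e he1 hyine)⟩
      · intro v hv
        obtain ⟨_, hv2⟩ := mem_marked_pm.mp hv
        refine mem_marked_pm.mpr ⟨?_, hv2.imp id fun h => hM h⟩
        rcases hv2 with h | h
        · exact fun hh => hyx (hh.symm.trans h)
        · exact fun hh => hyG (hh ▸ hOk.2 h)
      · intro v hv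
        obtain ⟨hv1, _, hv3, hv4⟩ := mem_free_pm.mp hv
        have : v ∈ G'.verts \ G'.marked := hF (Finset.mem_sdiff.mpr ⟨hv1, hv4⟩)
        rw [Finset.mem_sdiff] at this
        exact mem_free_pm.mpr ⟨this.1, fun hh => hyG (hh ▸ hv1), hv3, this.2⟩

lemma key (H : MarkedHypergraph V) (hval : H.IsValid) (h2 : 2 ≤ (H.verts \ H.marked).card)
    (x : V) (hx : x ∈ H.verts \ H.marked) :
    (MB.inter (H.plus x) (MB.dangersAt H x)).Nonempty ↔
      ∃ y ∈ (H.plus x).verts \ (H.plus x).marked, ¬ ((H.plus x).minus y).MakerWin := by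
  obtain ⟨hxv, hxm⟩ := Finset.mem_sdiff.mp hx
  have hOkH : Ok H := ⟨fun e he => (hval.2.1 e he).1, hval.2.2⟩
  constructor
  · rintro ⟨y, hyv, hym, hyD⟩
    have hyx : y ≠ x := by
      intro h; exact hym (h ▸ Finset.mem_insert_self x H.marked)
    have hymH : y ∉ H.marked := fun h => hym (Finset.mem_insert_of_mem h)
    refine ⟨y, mem_free_plus.mpr ⟨hyv, hyx, hymH⟩, fun hMW => ?_⟩
    set D : MarkedHypergraph V :=
      ⟨H.verts.erase y, H.edges.filter fun e => y ∉ e, H.marked.erase y⟩ with hDdef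
    have hDdanger : D ∈ MB.dangersAt H x := by
      refine ⟨⟨⟨x, Finset.mem_erase.mpr ⟨fun h => hyx h.symm, hxv⟩⟩, ?_, ?_⟩, ?_, ?_, ?_⟩
      · intro e he
        rw [Finset.mem_filter] at he
        obtain ⟨hsub, hne⟩ := hval.2.1 e he.1
        exact ⟨fun v hv => Finset.mem_erase.mpr ⟨fun h => he.2 (h ▸ hv), hsub hv⟩, hne⟩
      · exact fun v hv => Finset.mem_erase.mpr
          ⟨(Finset.mem_erase.mp hv).1, hval.2.2 (Finset.mem_erase.mp hv).2⟩
      · refine ⟨Finset.erase_subset y H.verts, Finset.filter_subset _ _, ?_⟩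
        ext v
        show v ∈ H.marked.erase y ↔ v ∈ H.verts.erase y ∩ H.marked
        simp only [Finset.mem_erase, Finset.mem_inter]
        exact ⟨fun ⟨h1, h2⟩ => ⟨⟨h1, hval.2.2 h2⟩, h2⟩, fun ⟨⟨h1, _⟩, h2⟩ => ⟨h1, h2⟩⟩
      · exact Finset.mem_erase.mpr ⟨fun h => hyx h.symm, hxv⟩
      · have : D.plus x = (H.plus x).minus y := by
          refine congrArg (MarkedHypergraph.mk (H.verts.erase y)
            (H.edges.filter fun e => y ∉ e)) ?_
          show insert x (H.marked.erase y) = ((H.plus x).marked).erase y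
          show insert x (H.marked.erase y) = (insert x H.marked).erase y
          ext v
          simp only [Finset.mem_insert, Finset.mem_erase]
          constructor
          · rintro (h | ⟨h1, h2⟩)
            · exact ⟨fun hh => hyx (hh.symm.trans h), Or.inl h⟩
            · exact ⟨h1, Or.inr h2⟩
          · rintro ⟨h1, h | h⟩
            · exact Or.inl h
            · exact Or.inr ⟨h1, h⟩
        rw [this]
        exact hMW
    have := hyD D hDdanger
    exact (Finset.mem_erase.mp this).1 rfl
  · rintro ⟨y, hy, hbw⟩
    obtain ⟨hyv, hyx, hym⟩ := mem_free_plus.mp hy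
    refine ⟨y, hyv, ?_, fun D hD => ?_⟩
    · simp only [plus, Finset.mem_insert, not_or]
      exact ⟨hyx, hym⟩
    obtain ⟨hDval, hDsub, hxD, hDwin⟩ := hD
    by_contra hyD
    apply hbw
    have hMDM : D.marked = D.verts ∩ H.marked := hDsub.2.2
    refine mono ((((H.plus x).minus y).verts \ ((H.plus x).minus y).marked).card)
      (D.plus x) _ le_rfl ?_ (ok_pm hOkH hxv y) ?_ ?_ ?_ hDwin
    · constructor
      · intro e he v hv
        exact (hDval.2.1 e he).1 hv
      · intro v hv
        simp only [plus, Finset.mem_insert] at hv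
        rcases hv with h | h
        · exact h ▸ hxD
        · exact hDval.2.2 h
    · intro e he
      refine mem_edges_pm.mpr ⟨hDsub.2.1 he, fun hyine => hyD ((hDval.2.1 e he).1 hyine)⟩
    · intro v hv
      simp only [plus, Finset.mem_insert] at hv
      refine mem_marked_pm.mpr ?_
      rcases hv with h | h
      · exact ⟨h ▸ fun hh => hyx hh.symm, Or.inl h⟩
      · have hvD : v ∈ D.verts ∩ H.marked := hMDM ▸ h
        rw [Finset.mem_inter] at hvD
        exact ⟨fun hh => hyD (hh ▸ hvD.1), Or.inr hvD.2⟩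
    · intro v hv
      simp only [plus, Finset.mem_sdiff, Finset.mem_insert, not_or] at hv
      obtain ⟨hv1, hv2, hv3⟩ := hv
      have hv4 : v ∉ H.marked := fun h =>
        hv3 (hMDM ▸ Finset.mem_inter.mpr ⟨hv1, h⟩)
      exact mem_free_pm.mpr ⟨hDsub.1 hv1, fun hh => hyD (hh ▸ hv1), hv2, hv4⟩

end Aux

end MB
/-- Theorem 1.16: Breaker wins iff the collections of all dangers intersect. -/
theorem statement8 {V : Type} [DecidableEq V] (H : MB.MarkedHypergraph V)
    (hval : H.IsValid) (hcard : 2 ≤ (H.verts \ H.marked).card) :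
    H.BreakerWin ↔
      ∀ x ∈ H.verts \ H.marked,
        (MB.inter (H.plus x) (MB.dangersAt H x)).Nonempty := by
  have h1 : ¬ (H.verts \ H.marked).card ≤ 1 := by omega
  show ¬ H.MakerWin ↔ _
  rw [MB.MarkedHypergraph.MakerWin, if_neg h1]
  push_neg
  exact forall₂_congr fun x hx => (MB.key H hval hcard x hx).symm
end

section
/- Let H be a marked hypergraph with |V(H)∖M(H)| ≥ 2, and for each x ∈ V(H)∖M(H) let 𝒳_x be an arbitrary collection of dangers at x in H. If H is a Breaker win, then I_{H^{+x}}(𝒳_x) ≠ ∅ for every x ∈ V(H)∖M(H). -/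
/-!
Let `y` be Breaker's winning answer to Maker's first move `x`, so that `H^{+x-y}` is a Breaker
win. A danger `D` at `x` avoiding `y` would make `D^{+x}` a subhypergraph of `H^{+x-y}`, and
Maker wins pass from subhypergraphs to the whole hypergraph by strategy stealing; so `y` lies in
every danger at `x`.
-/

namespace MB.MarkedHypergraph

variable {V : Type} [DecidableEq V] {H X : MarkedHypergraph V} {x y y' : V}

theorem free_plus : (H.plus x).verts \ (H.plus x).marked = (H.verts \ H.marked).erase x := by
  ext v
  simp only [plus, Finset.mem_sdiff, Finset.mem_insert, Finset.mem_erase, not_or]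
  tauto

theorem makerWin_iff_of_card_free_le_one (h : (H.verts \ H.marked).card ≤ 1) :
    H.MakerWin ↔ H.TrivialMakerWin := by
  rw [MakerWin, if_pos h]

theorem makerWin_iff_of_one_lt_card_free (h : 1 < (H.verts \ H.marked).card) :
    H.MakerWin ↔ ∃ x ∈ H.verts \ H.marked,
      ∀ y ∈ (H.plus x).verts \ (H.plus x).marked, ((H.plus x).minus y).MakerWin := by
  rw [MakerWin, if_neg h.not_ge]

theorem exists_free_insert_superset {e : Finset V} (hev : e ⊆ H.verts)
    (he : (e \ H.marked).card ≤ 1) (hfree : (H.verts \ H.marked).Nonempty) :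
    ∃ x ∈ H.verts \ H.marked, e ⊆ insert x H.marked := by
  obtain h0 | ⟨x, hx⟩ := (e \ H.marked).eq_empty_or_nonempty
  · obtain ⟨x, hx⟩ := hfree
    exact ⟨x, hx, (Finset.sdiff_eq_empty_iff_subset.mp h0).trans (Finset.subset_insert _ _)⟩
  · refine ⟨x, Finset.sdiff_subset_sdiff hev le_rfl hx, fun v hv => ?_⟩
    by_cases hvm : v ∈ H.marked
    · exact Finset.mem_insert_of_mem hvm
    · rw [Finset.card_le_one.mp he v (Finset.mem_sdiff.mpr ⟨hv, hvm⟩) x hx]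
      exact Finset.mem_insert_self x H.marked

/-- Maker claims the last free vertex of `e` (if any); Breaker can then never touch `e`. -/
theorem makerWin_of_mem_edges {e : Finset V} (he : e ∈ H.edges) (hev : e ⊆ H.verts)
    (hfree : (e \ H.marked).card ≤ 1) : H.MakerWin := by
  induction hn : (H.verts \ H.marked).card using Nat.strong_induction_on generalizing H with
  | _ n ih =>
  by_cases hc : (H.verts \ H.marked).card ≤ 1
  · exact (makerWin_iff_of_card_free_le_one hc).mpr ⟨e, he, hfree⟩
  rw [not_le] at hc
  obtain ⟨x, hx, hex⟩ := exists_free_insert_superset hev hfree (Finset.card_pos.mp (by omega))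
  refine (makerWin_iff_of_one_lt_card_free hc).mpr ⟨x, hx, fun y hy => ?_⟩
  have hye : y ∉ e := fun h => (Finset.mem_sdiff.mp hy).2 (hex h)
  refine ih _ (hn ▸ card_free_lt H x y hy) (Finset.mem_filter.mpr ⟨he, hye⟩)
    (fun v hv => Finset.mem_erase.mpr ⟨ne_of_mem_of_not_mem hv hye, hev hv⟩) ?_ rfl
  refine le_of_eq_of_le (Finset.card_eq_zero.mpr (Finset.sdiff_eq_empty_iff_subset.mpr ?_))
    zero_le_one
  exact fun v hv => Finset.mem_erase.mpr ⟨ne_of_mem_of_not_mem hv hye, hex hv⟩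

theorem IsSub.marked_subset (h : X.IsSub H) : X.marked ⊆ H.marked :=
  h.2.2 ▸ Finset.inter_subset_right

theorem IsSub.free_subset (h : X.IsSub H) :
    X.verts \ X.marked ⊆ H.verts \ H.marked := by
  intro v hv
  obtain ⟨hvX, hvm⟩ := Finset.mem_sdiff.mp hv
  exact Finset.mem_sdiff.mpr ⟨h.1 hvX, fun hm => hvm (h.2.2 ▸ Finset.mem_inter.mpr ⟨hvX, hm⟩)⟩

theorem IsSub.plus (h : X.IsSub H) (hx : x ∈ X.verts) : (X.plus x).IsSub (H.plus x) := by
  refine ⟨h.1, h.2.1, ?_⟩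
  simp only [MarkedHypergraph.plus, h.2.2, Finset.inter_insert_of_mem hx]

theorem IsSub.minus_right (h : X.IsSub H) (hE : ∀ e ∈ X.edges, e ⊆ X.verts)
    (hy : y ∉ X.verts) : X.IsSub (H.minus y) := by
  refine ⟨fun v hv => Finset.mem_erase.mpr ⟨ne_of_mem_of_not_mem hv hy, h.1 hv⟩,
    fun e he => Finset.mem_filter.mpr ⟨h.2.1 he, fun hye => hy (hE e he hye)⟩, ?_⟩
  rw [h.2.2]
  ext v
  simp only [minus, Finset.mem_inter, Finset.mem_erase]
  exact ⟨fun hv => ⟨hv.1, ne_of_mem_of_not_mem hv.1 hy, hv.2⟩, fun hv => ⟨hv.1, hv.2.2⟩⟩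

theorem IsSub.minus_minus (h : X.IsSub H) (hE : ∀ e ∈ X.edges, e ⊆ X.verts)
    (hy : y ∈ X.verts → y = y') : (X.minus y').IsSub (H.minus y) := by
  have hne : ∀ v ∈ X.verts, v ≠ y' → v ≠ y := fun v hv hvy' hvy => hvy' (hvy ▸ hy (hvy ▸ hv))
  refine ⟨fun v hv => ?_, fun e he => ?_, ?_⟩
  · obtain ⟨hvy', hvX⟩ := Finset.mem_erase.mp hv
    exact Finset.mem_erase.mpr ⟨hne v hvX hvy', h.1 hvX⟩
  · obtain ⟨heX, hy'e⟩ := Finset.mem_filter.mp he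
    exact Finset.mem_filter.mpr ⟨h.2.1 heX, fun hye =>
      hne y (hE e heX hye) (fun hyy' => hy'e (hyy' ▸ hye)) rfl⟩
  · rw [minus, minus, h.2.2]
    ext v
    simp only [Finset.mem_inter, Finset.mem_erase]
    exact ⟨fun hv => ⟨⟨hv.1, hv.2.1⟩, hne v hv.2.1 hv.1, hv.2.2⟩,
      fun hv => ⟨hv.1.1, hv.1.2, hv.2.2⟩⟩

theorem edges_subset_verts_minus (hE : ∀ e ∈ X.edges, e ⊆ X.verts) :
    ∀ e ∈ (X.minus y).edges, e ⊆ (X.minus y).verts := by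
  intro e he v hv
  obtain ⟨heX, hye⟩ := Finset.mem_filter.mp he
  exact Finset.mem_erase.mpr ⟨ne_of_mem_of_not_mem hv hye, hE e heX hv⟩

/-- Strategy stealing: Maker plays `X`'s winning strategy inside `H`; a Breaker move outside `X`
is answered as if Breaker had claimed an arbitrary free vertex of `X`. -/
theorem IsSub.makerWin (h : X.IsSub H) (hE : ∀ e ∈ X.edges, e ⊆ X.verts)
    (hX : X.MakerWin) : H.MakerWin := by
  induction hn : (H.verts \ H.marked).card using Nat.strong_induction_on
    generalizing H X with
  | _ n ih =>
  by_cases hc : (X.verts \ X.marked).card ≤ 1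
  · obtain ⟨e, he, hfree⟩ := (makerWin_iff_of_card_free_le_one hc).mp hX
    exact makerWin_of_mem_edges (h.2.1 he) ((hE e he).trans h.1)
      ((Finset.card_le_card (Finset.sdiff_subset_sdiff le_rfl h.marked_subset)).trans hfree)
  rw [not_le] at hc
  obtain ⟨x, hx, hstrat⟩ := (makerWin_iff_of_one_lt_card_free hc).mp hX
  have hcH : 1 < (H.verts \ H.marked).card := hc.trans_le (Finset.card_le_card h.free_subset)
  refine (makerWin_iff_of_one_lt_card_free hcH).mpr ⟨x, h.free_subset hx, fun y hy => ?_⟩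
  have hxX : x ∈ X.verts := (Finset.mem_sdiff.mp hx).1
  obtain ⟨y', hy'X, hyy'⟩ :
      ∃ y' ∈ (X.plus x).verts \ (X.plus x).marked, y ∈ X.verts → y = y' := by
    by_cases hyX : y ∈ X.verts
    · refine ⟨y, Finset.mem_sdiff.mpr ⟨hyX, fun hm => ?_⟩, fun _ => rfl⟩
      exact (Finset.mem_sdiff.mp hy).2 (Finset.insert_subset_insert x h.marked_subset hm)
    · obtain ⟨y', hy'⟩ : ((X.plus x).verts \ (X.plus x).marked).Nonempty := by
        rw [free_plus, ← Finset.card_pos, Finset.card_erase_of_mem hx]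
        omega
      exact ⟨y', hy', fun hyX' => absurd hyX' hyX⟩
  exact ih _ (hn ▸ card_free_lt H x y hy) ((h.plus hxX).minus_minus hE hyy')
    (edges_subset_verts_minus hE) (hstrat y' hy'X) rfl

end MB.MarkedHypergraph

theorem statement10_general {V : Type} [DecidableEq V] (H : MB.MarkedHypergraph V)
    (hcard : 2 ≤ (H.verts \ H.marked).card)
    (𝒳 : V → Set (MB.MarkedHypergraph V))
    (h𝒳 : ∀ x ∈ H.verts \ H.marked, ∀ D ∈ 𝒳 x, D ∈ MB.dangersAt H x)
    (hB : H.BreakerWin) :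
    ∀ x ∈ H.verts \ H.marked, (MB.inter (H.plus x) (𝒳 x)).Nonempty := by
  intro x hx
  obtain ⟨y, hy, hBy⟩ : ∃ y ∈ (H.plus x).verts \ (H.plus x).marked,
      ((H.plus x).minus y).BreakerWin := by
    rw [MB.MarkedHypergraph.BreakerWin,
      MB.MarkedHypergraph.makerWin_iff_of_one_lt_card_free hcard] at hB
    push Not at hB
    exact hB x hx
  obtain ⟨hyV, hyM⟩ := Finset.mem_sdiff.mp hy
  refine ⟨y, hyV, hyM, fun D hD => ?_⟩
  by_contra hyD
  obtain ⟨⟨-, hDE, -⟩, hDH, hxD, hDwin⟩ := h𝒳 x hx D hD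
  have hE : ∀ e ∈ D.edges, e ⊆ D.verts := fun e he => (hDE e he).1
  exact hBy (((hDH.plus hxD).minus_right hE hyD).makerWin hE hDwin)

/-- Corollary 1.17: if Breaker wins then any collections of dangers intersect. -/
theorem statement10 {V : Type} [DecidableEq V] (H : MB.MarkedHypergraph V)
    (hval : H.IsValid) (hcard : 2 ≤ (H.verts \ H.marked).card)
    (𝒳 : V → Set (MB.MarkedHypergraph V))
    (h𝒳 : ∀ x ∈ H.verts \ H.marked, ∀ D ∈ 𝒳 x, D ∈ MB.dangersAt H x)
    (hB : H.BreakerWin) :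
    ∀ x ∈ H.verts \ H.marked, (MB.inter (H.plus x) (𝒳 x)).Nonempty :=
  statement10_general H hcard 𝒳 h𝒳 hB
end
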